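/- arXiv:2001.08045 — 13 statements merged into one kernel-verified Lean document; each statement's English description precedes it below -/
import Mathlib

section
/- Profunctor representation theorem: the end over the category of Tambara modules of the sets of functions p(a,b) → p(s,t), namely ∫_{p ∈ Tamb} Set(p(a,b), p(s,t)), is naturally isomorphic to the optic coend ∫^{m ∈ M} C(s, m̲ a) × D(m̲ b, t), for all a,s ∈ C and b,t ∈ D. -/
/-!
Profunctor representation theorem: given small categories `C`, `D`, a small monoidal
category `M` and strong monoidal actions `FC : M ⥤ [C,C]`, `FD : M ⥤ [D,D]`, the end over
the category of Tambara modules of the sets of functions `p(a,b) → p(s,t)`, i.e.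
`∫_{p ∈ Tamb} Set(p(a,b), p(s,t))`, is naturally isomorphic to the optic coend
`∫^{m ∈ M} C(s, m̲ a) × D(m̲ b, t)`, for all `a, s ∈ C` and `b, t ∈ D`.
-/

open CategoryTheory MonoidalCategory Opposite

attribute [local instance] CategoryTheory.endofunctorMonoidalCategory

universe u

variable {M : Type u} [SmallCategory M] [MonoidalCategory M]
  {C : Type u} [SmallCategory C] {D : Type u} [SmallCategory D]
  (FC : M ⥤ C ⥤ C) [FC.Monoidal] (FD : M ⥤ D ⥤ D) [FD.Monoidal]

/-- A Tambara module for the strong monoidal actions `FC`, `FD`: a profunctor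
`p : Cᵒᵖ × D ⥤ Set` with a family `α_{m,a,b} : p(a,b) → p(m̲ a, m̲ b)` natural in `a, b`,
dinatural in `m`, compatible with the unit and with the tensor of the actions
(`α_i = p(φ_i⁻¹, φ_i)` and `α_{m⊗n} = p(φ_{m,n}⁻¹, φ_{m,n}) ∘ α_n ∘ α_m`, written with the
structure morphisms of the monoidal functors). -/
structure Tambara where
  /-- the underlying profunctor -/
  p : Cᵒᵖ × D ⥤ Type u
  /-- the Tambara structure maps -/
  α : ∀ (m : M) (a : C) (b : D),
    p.obj (op a, b) → p.obj (op ((FC.obj m).obj a), (FD.obj m).obj b)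
  natural : ∀ (m : M) {a a' : C} {b b' : D} (f : a' ⟶ a) (g : b ⟶ b') (x : p.obj (op a, b)),
    α m a' b' (p.map (f.op, g) x) =
      p.map (((FC.obj m).map f).op, (FD.obj m).map g) (α m a b x)
  dinatural : ∀ {m m' : M} (h : m ⟶ m') (a : C) (b : D) (x : p.obj (op a, b)),
    p.map ((𝟙 (op ((FC.obj m).obj a)), (FD.map h).app b) :
        (op ((FC.obj m).obj a), (FD.obj m).obj b) ⟶
          (op ((FC.obj m).obj a), (FD.obj m').obj b)) (α m a b x) =
      p.map ((((FC.map h).app a).op, 𝟙 ((FD.obj m').obj b)) :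
        (op ((FC.obj m').obj a), (FD.obj m').obj b) ⟶
          (op ((FC.obj m).obj a), (FD.obj m').obj b)) (α m' a b x)
  unit : ∀ (a : C) (b : D) (x : p.obj (op a, b)),
    α (𝟙_ M) a b x =
      p.map (((Functor.OplaxMonoidal.η FC).app a).op, (Functor.LaxMonoidal.ε FD).app b) x
  mult : ∀ (m n : M) (a : C) (b : D) (x : p.obj (op a, b)),
    α (m ⊗ n) a b x =
      p.map (((Functor.OplaxMonoidal.δ FC m n).app a).op,
          (Functor.LaxMonoidal.μ FD m n).app b)
        (α n ((FC.obj m).obj a) ((FD.obj m).obj b) (α m a b x))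

/-- A morphism of Tambara modules: a natural transformation of the underlying profunctors
commuting with the Tambara structure maps. -/
structure TambaraHom (P Q : Tambara FC FD) where
  /-- the underlying natural transformation -/
  η : P.p ⟶ Q.p
  comm : ∀ (m : M) (a : C) (b : D) (x : P.p.obj (op a, b)),
    η.app (op ((FC.obj m).obj a), (FD.obj m).obj b) (P.α m a b x) =
      Q.α m a b (η.app (op a, b) x)

/-- The end `∫_{p ∈ Tamb} Set(p(a,b), p(s,t))`: families of maps `p(a,b) → p(s,t)`,
one for each Tambara module, natural (dinatural) in the Tambara module. -/
def ProfOptic (a s : C) (b t : D) : Type (u + 1) :=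
  { e : ∀ P : Tambara FC FD, P.p.obj (op a, b) → P.p.obj (op s, t) //
    ∀ (P Q : Tambara FC FD) (φ : TambaraHom FC FD P Q) (x : P.p.obj (op a, b)),
      φ.η.app (op s, t) (e P x) = e Q (φ.η.app (op a, b) x) }

/-- The generating relation of the optic coend `∫^{m ∈ M} C(s, m̲ a) × D(m̲ b, t)`. -/
def OpticRel (a s : C) (b t : D) :
    (Σ m : M, (s ⟶ (FC.obj m).obj a) × ((FD.obj m).obj b ⟶ t)) →
      (Σ m : M, (s ⟶ (FC.obj m).obj a) × ((FD.obj m).obj b ⟶ t)) → Prop :=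
  fun x y => ∃ h : x.1 ⟶ y.1,
    y.2.1 = x.2.1 ≫ (FC.map h).app a ∧ x.2.2 = (FD.map h).app b ≫ y.2.2

/-- The existential (mixed) optic: the coend `∫^{m ∈ M} C(s, m̲ a) × D(m̲ b, t)`. -/
def ExOptic (a s : C) (b t : D) : Type u := Quot (OpticRel FC FD a s b t)

/-!
The optics `ExOptic(a, b)(-, -)` form the free Tambara module on one generator of type `(a, b)`,
namely the identity optic `(𝟙_ M, ε, η)`: an element `x ∈ p(a, b)` of a Tambara module `p`
corresponds to the Tambara morphism sending an optic `(m, u, v)` to `p(u, v)(α_m x)`. This is a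
Yoneda lemma for Tambara modules, so an element of the end is determined by its value at the
identity optic of the free module, and every optic arises this way.
-/

open Functor.LaxMonoidal Functor.OplaxMonoidal

set_option linter.unusedSectionVars false

namespace Tambara

variable {FC FD}

theorem map_α_dinatural (P : Tambara FC FD) {m m' : M} (h : m ⟶ m') {a s : C} {b t : D}
    (u : s ⟶ (FC.obj m).obj a) (v : (FD.obj m').obj b ⟶ t) (x : P.p.obj (op a, b)) :
    P.p.map (Y := (op s, t)) (u.op, (FD.map h).app b ≫ v) (P.α m a b x) =
      P.p.map (Y := (op s, t)) ((u ≫ (FC.map h).app a).op, v) (P.α m' a b x) := by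
  have := congrArg (P.p.map (Y := (op s, t)) (u.op, v)) (P.dinatural h a b x)
  simpa only [← Functor.map_comp_apply, prod_comp, Category.id_comp, Category.comp_id,
    ← op_comp] using this

end Tambara

namespace ExOptic

variable {FC FD} {a : C} {b : D}

def mk {s : C} {t : D} (m : M) (u : s ⟶ (FC.obj m).obj a) (v : (FD.obj m).obj b ⟶ t) :
    ExOptic FC FD a s b t :=
  Quot.mk _ ⟨m, u, v⟩

@[elab_as_elim]
theorem ind {s : C} {t : D} {motive : ExOptic FC FD a s b t → Prop}
    (mk : ∀ m u v, motive (mk m u v)) (q : ExOptic FC FD a s b t) : motive q :=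
  Quot.ind (fun z => mk z.1 z.2.1 z.2.2) q

theorem mk_eq_mk {s : C} {t : D} {m m' : M} (h : m ⟶ m')
    {u : s ⟶ (FC.obj m).obj a} {v : (FD.obj m).obj b ⟶ t}
    {u' : s ⟶ (FC.obj m').obj a} {v' : (FD.obj m').obj b ⟶ t}
    (hu : u' = u ≫ (FC.map h).app a) (hv : v = (FD.map h).app b ≫ v') :
    (mk m u v : ExOptic FC FD a s b t) = mk m' u' v' :=
  Quot.sound ⟨h, hu, hv⟩

def map {x x' : C} {y y' : D} (f : x' ⟶ x) (g : y ⟶ y') :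
    ExOptic FC FD a x b y → ExOptic FC FD a x' b y' :=
  Quot.map (fun z => ⟨z.1, f ≫ z.2.1, z.2.2 ≫ g⟩) fun _ _ ⟨h, hu, hv⟩ =>
    ⟨h, by simp [hu], by simp [hv]⟩

@[simp]
theorem map_mk {x x' : C} {y y' : D} (f : x' ⟶ x) (g : y ⟶ y') (m : M)
    (u : x ⟶ (FC.obj m).obj a) (v : (FD.obj m).obj b ⟶ y) :
    map f g (mk m u v : ExOptic FC FD a x b y) = mk m (f ≫ u) (v ≫ g) :=
  rfl

variable (FC FD a b) in
def profunctor : Cᵒᵖ × D ⥤ Type u where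
  obj xy := ExOptic FC FD a xy.1.unop b xy.2
  map fg := TypeCat.ofHom (map fg.1.unop fg.2)
  map_id _ := by
    ext q
    induction q using ind
    simp
  map_comp _ _ := by
    ext q
    induction q using ind
    simp

variable (m : M)

/-- Since the tensor product of endofunctors is `F ⊗ G = F ⋙ G`, acting by `m` on an optic with
residual `n` gives residual `n ⊗ m`, not `m ⊗ n`. -/
def act {x : C} {y : D} :
    ExOptic FC FD a x b y → ExOptic FC FD a ((FC.obj m).obj x) b ((FD.obj m).obj y) :=
  Quot.map (fun z => ⟨z.1 ⊗ m, (FC.obj m).map z.2.1 ≫ (μ FC z.1 m).app a,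
      (δ FD z.1 m).app b ≫ (FD.obj m).map z.2.2⟩) fun _ _ ⟨h, hu, hv⟩ =>
    ⟨h ▷ m, by simp [hu], by simp [hv]⟩

@[simp]
theorem act_mk {x : C} {y : D} (n : M) (u : x ⟶ (FC.obj n).obj a) (v : (FD.obj n).obj b ⟶ y) :
    act m (mk n u v : ExOptic FC FD a x b y) =
      mk (n ⊗ m) ((FC.obj m).map u ≫ (μ FC n m).app a) ((δ FD n m).app b ≫ (FD.obj m).map v) :=
  rfl

theorem act_map {x x' : C} {y y' : D} (f : x' ⟶ x) (g : y ⟶ y') (q : ExOptic FC FD a x b y) :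
    act m (map f g q) = map ((FC.obj m).map f) ((FD.obj m).map g) (act m q) := by
  induction q using ind
  simp

variable {m} in
theorem map_act_dinatural {m' : M} (h : m ⟶ m') {x : C} {y : D} (q : ExOptic FC FD a x b y) :
    map (𝟙 _) ((FD.map h).app y) (act m q) = map ((FC.map h).app x) (𝟙 _) (act m' q) := by
  induction q using ind with | mk n u v =>
  exact mk_eq_mk (n ◁ h) (by simp [← NatTrans.naturality_assoc]) (by simp)

theorem act_tensorUnit {x : C} {y : D} (q : ExOptic FC FD a x b y) :
    act (𝟙_ M) q = map ((η FC).app x) ((ε FD).app y) q := by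
  induction q using ind with | mk n u v =>
  exact mk_eq_mk (ρ_ n).hom (by simp) (by simp [← ε_naturality])

theorem act_tensor (m' : M) {x : C} {y : D} (q : ExOptic FC FD a x b y) :
    act (m ⊗ m') q = map ((δ FC m m').app x) ((μ FD m m').app y) (act m' (act m q)) := by
  induction q using ind with | mk n u v =>
  exact mk_eq_mk (α_ n m m').inv (by simp) (by simp)

variable (a b) in
def tambara : Tambara FC FD where
  p := profunctor FC FD a b
  α m _ _ := act m
  natural m _ _ _ _ f g := act_map m f g
  dinatural h _ _ := map_act_dinatural h
  unit _ _ := act_tensorUnit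
  mult m m' _ _ := act_tensor m m'

def eval (P : Tambara FC FD) (x : P.p.obj (op a, b)) {s : C} {t : D} :
    ExOptic FC FD a s b t → P.p.obj (op s, t) :=
  Quot.lift (fun z => P.p.map (Y := (op s, t)) (z.2.1.op, z.2.2) (P.α z.1 a b x))
    fun _ _ ⟨h, hu, hv⟩ => by
      dsimp only
      rw [hu, hv, P.map_α_dinatural]

@[simp]
theorem eval_mk (P : Tambara FC FD) (x : P.p.obj (op a, b)) {s : C} {t : D} (m : M)
    (u : s ⟶ (FC.obj m).obj a) (v : (FD.obj m).obj b ⟶ t) :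
    eval P x (mk m u v) = P.p.map (Y := (op s, t)) (u.op, v) (P.α m a b x) :=
  rfl

theorem eval_map (P : Tambara FC FD) (x : P.p.obj (op a, b)) {s s' : C} {t t' : D}
    (f : s' ⟶ s) (g : t ⟶ t') (q : ExOptic FC FD a s b t) :
    eval P x (map f g q) = P.p.map (Y := (op s', t')) (f.op, g) (eval P x q) := by
  induction q using ind
  simp [← Functor.map_comp_apply]

theorem eval_act (P : Tambara FC FD) (x : P.p.obj (op a, b)) {s : C} {t : D}
    (q : ExOptic FC FD a s b t) : eval P x (act m q) = P.α m s t (eval P x q) := by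
  induction q using ind with | mk n u v =>
  simp [P.mult, P.natural, ← Functor.map_comp_apply, ← op_comp]

theorem eval_naturality {P Q : Tambara FC FD} (φ : TambaraHom FC FD P Q)
    (x : P.p.obj (op a, b)) {s : C} {t : D} (q : ExOptic FC FD a s b t) :
    φ.η.app (op s, t) (eval P x q) = eval Q (φ.η.app (op a, b) x) q := by
  induction q using ind
  simp [φ.comm]

def evalHom (P : Tambara FC FD) (x : P.p.obj (op a, b)) : TambaraHom FC FD (tambara a b) P where
  η :=
    { app xy := TypeCat.ofHom (eval P x)
      naturality _ _ fg := by
        ext q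
        exact eval_map P x fg.1.unop fg.2 q }
  comm m _ _ := eval_act m P x

variable (FC FD a b) in
def id : ExOptic FC FD a a b b :=
  mk (𝟙_ M) ((ε FC).app a) ((η FD).app b)

theorem eval_id (P : Tambara FC FD) (x : P.p.obj (op a, b)) : eval P x (id FC FD a b) = x := by
  rw [id, eval_mk, P.unit, ← Functor.map_comp_apply]
  simp [← op_comp]

theorem eval_tambara_id {s : C} {t : D} (q : ExOptic FC FD a s b t) :
    eval (tambara a b) (id FC FD a b) q = q := by
  induction q using ind with | mk m u v =>
  exact mk_eq_mk (λ_ m).hom (by simp) (by simp)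

end ExOptic

def profOpticEquivExOptic (a s : C) (b t : D) :
    ProfOptic FC FD a s b t ≃ ExOptic FC FD a s b t where
  toFun e := e.1 (ExOptic.tambara a b) (ExOptic.id FC FD a b)
  invFun q := ⟨fun P x => ExOptic.eval P x q, fun _ _ φ x => ExOptic.eval_naturality φ x q⟩
  left_inv e := Subtype.ext <| funext₂ fun P x =>
    (e.2 _ P (ExOptic.evalHom P x) _).trans (congrArg (e.1 P) (ExOptic.eval_id P x))
  right_inv := ExOptic.eval_tambara_id

/-- Profunctor representation theorem:
`∫_{p ∈ Tamb} Set(p(a,b), p(s,t)) ≅ ∫^{m ∈ M} C(s, m̲ a) × D(m̲ b, t)`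
for all `a, s ∈ C` and `b, t ∈ D`. -/
theorem profunctor_representation (a s : C) (b t : D) :
    Nonempty (ProfOptic FC FD a s b t ≃ ExOptic FC FD a s b t) :=
  ⟨profOpticEquivExOptic FC FD a s b t⟩
end

section
/- Lenses are optics for the cartesian product: in a small category C with finite products, for all objects s, t, a, b there is an isomorphism of sets ∫^{c ∈ C} C(s, c × a) × C(c × b, t) ≅ C(s, a) × C(s × b, t), natural in s, t, a, b. -/
/-!
The inverse sends the class of `(c, l, r)` to the lens `(l ≫ snd, (l ≫ fst) × 𝟙 ≫ r)`, which
respects the coend relation because `prod.map f 𝟙` commutes with both projections.  It is a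
right inverse because `l` factors as `lift 𝟙 (l ≫ snd) ≫ prod.map (l ≫ fst) 𝟙`, so that
`l ≫ fst : s ⟶ c` itself relates `(c, l, r)` to the image of its lens.

The coend is realized as the quotient of `Σ c, C(s, c ⨯ a) × C(c ⨯ b, t)` by the usual coend
relation; the comparison map is the canonical one, hence natural in `s, t, a, b`.
-/

open CategoryTheory CategoryTheory.Limits

universe u

variable {C : Type u} [SmallCategory C] [HasFiniteProducts C]

/-- The generating relation of the coend `∫^{c ∈ C} C(s, c ⨯ a) × C(c ⨯ b, t)`. -/
def LensRel (s t a b : C) :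
    (Σ c : C, (s ⟶ c ⨯ a) × (c ⨯ b ⟶ t)) → (Σ c : C, (s ⟶ c ⨯ a) × (c ⨯ b ⟶ t)) → Prop :=
  fun x y => ∃ f : x.1 ⟶ y.1,
    y.2.1 = x.2.1 ≫ prod.map f (𝟙 a) ∧ x.2.2 = prod.map f (𝟙 b) ≫ y.2.2

/-- The existential optic for the action of the cartesian product:
the coend `∫^{c ∈ C} C(s, c ⨯ a) × C(c ⨯ b, t)`. -/
def LensOptic (s t a b : C) : Type u := Quot (LensRel s t a b)

noncomputable section

namespace LensOptic

variable {s t a b : C}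

def lensOfRep (x : Σ c : C, (s ⟶ c ⨯ a) × (c ⨯ b ⟶ t)) : (s ⟶ a) × (s ⨯ b ⟶ t) :=
  (x.2.1 ≫ prod.snd, prod.map (x.2.1 ≫ prod.fst) (𝟙 b) ≫ x.2.2)

theorem lensOfRep_eq_of_lensRel {x y : Σ c : C, (s ⟶ c ⨯ a) × (c ⨯ b ⟶ t)}
    (h : LensRel s t a b x y) : lensOfRep x = lensOfRep y := by
  obtain ⟨f, hl, hr⟩ := h
  simp only [lensOfRep, hl, hr, Category.assoc, prod.map_snd, Category.comp_id, prod.map_fst,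
    prod.map_map_assoc]

def toLens : LensOptic s t a b → (s ⟶ a) × (s ⨯ b ⟶ t) :=
  Quot.lift lensOfRep fun _ _ => lensOfRep_eq_of_lensRel

def ofLens (vu : (s ⟶ a) × (s ⨯ b ⟶ t)) : LensOptic s t a b :=
  Quot.mk _ ⟨s, prod.lift (𝟙 s) vu.1, vu.2⟩

theorem toLens_ofLens (vu : (s ⟶ a) × (s ⨯ b ⟶ t)) : toLens (ofLens vu) = vu := by
  simp [toLens, ofLens, lensOfRep, prod.lift_fst, prod.lift_snd]

theorem lift_comp_prodMap_eq {c : C} (l : s ⟶ c ⨯ a) :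
    prod.lift (𝟙 s) (l ≫ prod.snd) ≫ prod.map (l ≫ prod.fst) (𝟙 a) = l := by
  ext <;> simp [prod.lift_fst, prod.lift_snd]

theorem ofLens_toLens (x : LensOptic s t a b) : ofLens (toLens x) = x := by
  induction x using Quot.ind with
  | mk x =>
    obtain ⟨c, l, r⟩ := x
    exact Quot.sound ⟨l ≫ prod.fst, (lift_comp_prodMap_eq l).symm, rfl⟩

end LensOptic

end

/-- Lenses are optics for the cartesian product: the canonical (natural in `s t a b`) map
from concrete lenses `C(s, a) × C(s ⨯ b, t)` to the coend `∫^{c ∈ C} C(s, c ⨯ a) × C(c ⨯ b, t)`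
is a bijection. -/
theorem lens_is_optic_for_product (s t a b : C) :
    Function.Bijective (fun vu : (s ⟶ a) × (s ⨯ b ⟶ t) =>
      (Quot.mk (LensRel s t a b) ⟨s, prod.lift (𝟙 s) vu.1, vu.2⟩ : LensOptic s t a b)) :=
  Function.bijective_iff_has_inverse.mpr
    ⟨LensOptic.toLens, LensOptic.toLens_ofLens, LensOptic.ofLens_toLens⟩
end

section
/- Prisms are optics for the coproduct: in a small category C with finite coproducts, for all objects s, t, a, b there is an isomorphism of sets ∫^{c ∈ C} C(s, c + a) × C(c + b, t) ≅ C(s, t + a) × C(b, t), natural in s, t, a, b. -/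
/-!
Prisms are optics for the coproduct: in a small category `C` with finite coproducts,
for all objects `s t a b` the coend `∫^{c ∈ C} C(s, c ⨿ a) × C(c ⨿ b, t)` is isomorphic to
`C(s, t ⨿ a) × C(b, t)`, naturally in `s, t, a, b`.  We realize the coend as a quotient of
`Σ c, C(s, c ⨿ a) × C(c ⨿ b, t)` by the usual coend relation, and we assert that the
*canonical* comparison map (natural in all four variables by construction) is a bijection.
-/

open CategoryTheory CategoryTheory.Limits

universe u

variable {C : Type u} [SmallCategory C] [HasFiniteCoproducts C]

/-- The generating relation of the coend `∫^{c ∈ C} C(s, c ⨿ a) × C(c ⨿ b, t)`. -/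
def PrismRel (s t a b : C) :
    (Σ c : C, (s ⟶ c ⨿ a) × (c ⨿ b ⟶ t)) → (Σ c : C, (s ⟶ c ⨿ a) × (c ⨿ b ⟶ t)) → Prop :=
  fun x y => ∃ f : x.1 ⟶ y.1,
    y.2.1 = x.2.1 ≫ coprod.map f (𝟙 a) ∧ x.2.2 = coprod.map f (𝟙 b) ≫ y.2.2

/-- The existential optic for the action of the coproduct:
the coend `∫^{c ∈ C} C(s, c ⨿ a) × C(c ⨿ b, t)`. -/
def PrismOptic (s t a b : C) : Type u := Quot (PrismRel s t a b)

/-! Every element `⟨c, f, g⟩` of the coend is related, through `coprod.inl ≫ g : c ⟶ t`, to one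
with `c = t` and second component of the form `coprod.desc (𝟙 t) u`, because `g` factors as
`coprod.map (coprod.inl ≫ g) (𝟙 b) ≫ coprod.desc (𝟙 t) (coprod.inr ≫ g)`. Pushing the first
component forward along the same morphism gives an inverse that respects the coend relation. -/

theorem CategoryTheory.Limits.coprod.map_inl_comp_desc_inr {D : Type*} [Category D] {c b t : D}
    [HasBinaryCoproduct c b] [HasBinaryCoproduct t b] (g : c ⨿ b ⟶ t) :
    coprod.map (coprod.inl ≫ g) (𝟙 b) ≫ coprod.desc (𝟙 t) (coprod.inr ≫ g) = g := by
  apply coprod.hom_ext <;>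
    simp only [coprod.map_desc, coprod.inl_desc, coprod.inr_desc, Category.comp_id,
      Category.id_comp]

namespace PrismOptic

variable (s t a b : C)

noncomputable def ofConcrete (mb : (s ⟶ t ⨿ a) × (b ⟶ t)) : PrismOptic s t a b :=
  Quot.mk _ ⟨t, mb.1, coprod.desc (𝟙 t) mb.2⟩

noncomputable def toConcrete : PrismOptic s t a b → (s ⟶ t ⨿ a) × (b ⟶ t) :=
  Quot.lift (fun x => (x.2.1 ≫ coprod.map (coprod.inl ≫ x.2.2) (𝟙 a), coprod.inr ≫ x.2.2)) <| by
    rintro ⟨c, f, g⟩ ⟨c', f', g'⟩ ⟨k, hf, hg⟩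
    rw [hf, hg]
    ext <;> simp [coprod.map_map]

theorem toConcrete_ofConcrete :
    Function.LeftInverse (toConcrete s t a b) (ofConcrete s t a b) := by
  rintro ⟨m, u⟩
  ext <;> simp [toConcrete, ofConcrete, coprod.inl_desc, coprod.inr_desc]

theorem ofConcrete_toConcrete :
    Function.RightInverse (toConcrete s t a b) (ofConcrete s t a b) := by
  rintro ⟨c, f, g⟩
  exact (Quot.sound ⟨coprod.inl ≫ g, rfl, (coprod.map_inl_comp_desc_inr g).symm⟩).symm

noncomputable def equivConcrete : (s ⟶ t ⨿ a) × (b ⟶ t) ≃ PrismOptic s t a b where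
  toFun := ofConcrete s t a b
  invFun := toConcrete s t a b
  left_inv := toConcrete_ofConcrete s t a b
  right_inv := ofConcrete_toConcrete s t a b

end PrismOptic

/-- Prisms are optics for the coproduct: the canonical (natural in `s t a b`) map from
concrete prisms `C(s, t ⨿ a) × C(b, t)` to the coend `∫^{c ∈ C} C(s, c ⨿ a) × C(c ⨿ b, t)`
is a bijection. -/
theorem prism_is_optic_for_coproduct (s t a b : C) :
    Function.Bijective (fun mb : (s ⟶ t ⨿ a) × (b ⟶ t) =>
      (Quot.mk (PrismRel s t a b) ⟨t, mb.1, coprod.desc (𝟙 t) mb.2⟩ : PrismOptic s t a b)) :=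
  (PrismOptic.equivConcrete s t a b).bijective
end

section
/- Traversals are optics for power series functors: in a small cartesian closed category C with coproducts indexed by the natural numbers (over which the product distributes), for all objects s, t, a, b there is an isomorphism of sets ∫^{c ∈ [ℕ, C]} C(s, Σ_{n∈ℕ} c_n × aⁿ) × C(Σ_{n∈ℕ} c_n × bⁿ, t) ≅ C(s, Σ_{n∈ℕ} aⁿ × (bⁿ ⟹ t)), where the coend ranges over the category [ℕ, C] of functors from the discrete category of natural numbers to C. -/
/-!
Currying the `n`-th component of the backward part `∐ₙ (cₙ ⊗ bⁿ) ⟶ t` gives a family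
`cₙ ⟶ (bⁿ ⟹ t)`, i.e. a morphism of `[ℕ, C]` from any residual `c` to the residual
`n ↦ bⁿ ⟹ t`, along which the backward part becomes evaluation. So every element of the coend
is represented by a pair with this residual and evaluation as backward part, and pushing the
forward part along the curried family is invariant under the coend relation, which makes
this representative unique.
-/

open CategoryTheory CategoryTheory.Limits CategoryTheory.MonoidalCategory
open CategoryTheory.CartesianClosed

attribute [local instance] BraidedCategory.ofCartesianMonoidalCategory

universe u

variable {C : Type u} [SmallCategory C] [CartesianMonoidalCategory C] [MonoidalClosed C]
  [HasColimitsOfShape (Discrete ℕ) C]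

/-- The `n`-fold cartesian power of an object. -/
def npow (a : C) : ℕ → C
  | 0 => 𝟙_ C
  | n + 1 => a ⊗ npow a n

/-- The generating relation of the coend
`∫^{c ∈ [ℕ,C]} C(s, ∐ₙ (cₙ ⊗ aⁿ)) × C(∐ₙ (cₙ ⊗ bⁿ), t)`; morphisms of the indexing
functor category `[ℕ, C]` (with ℕ discrete) are families `f : ∀ n, c n ⟶ c' n`. -/
def TraversalRel (s t a b : C) :
    (Σ c : ℕ → C, (s ⟶ ∐ fun n => c n ⊗ npow a n) × ((∐ fun n => c n ⊗ npow b n) ⟶ t)) →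
      (Σ c : ℕ → C, (s ⟶ ∐ fun n => c n ⊗ npow a n) × ((∐ fun n => c n ⊗ npow b n) ⟶ t)) →
        Prop :=
  fun x y => ∃ f : ∀ n, x.1 n ⟶ y.1 n,
    y.2.1 = x.2.1 ≫ Limits.Sigma.map (fun n => MonoidalCategory.tensorHom (f n) (𝟙 (npow a n))) ∧
      x.2.2 = Limits.Sigma.map (fun n => MonoidalCategory.tensorHom (f n) (𝟙 (npow b n))) ≫ y.2.2

/-- The existential optic for the action of power series functors
`c ↦ (x ↦ ∐ₙ (cₙ ⊗ xⁿ))`. -/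
def TraversalOptic (s t a b : C) : Type u := Quot (TraversalRel s t a b)

section CurryComponent

variable {c d : ℕ → C} {t : C}

noncomputable def curryComponent (g : (∐ fun n => c n ⊗ d n) ⟶ t) (n : ℕ) :
    c n ⟶ (d n ⟹ t) :=
  MonoidalClosed.curry ((β_ (d n) (c n)).hom ≫ Sigma.ι (fun m => c m ⊗ d m) n ≫ g)

noncomputable def sigmaEv (d : ℕ → C) (t : C) : (∐ fun n => (d n ⟹ t) ⊗ d n) ⟶ t :=
  Sigma.desc fun n => (β_ (d n ⟹ t) (d n)).hom ≫ (ihom.ev (d n)).app t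

theorem comp_curryComponent {c' : ℕ → C} (f : ∀ n, c n ⟶ c' n)
    (g : (∐ fun n => c' n ⊗ d n) ⟶ t) (n : ℕ) :
    f n ≫ curryComponent g n =
      curryComponent (Limits.Sigma.map (fun m => f m ▷ d m) ≫ g) n := by
  rw [curryComponent, curryComponent, ← MonoidalClosed.curry_natural_left,
    BraidedCategory.braiding_naturality_right_assoc, Sigma.ι_map_assoc]

theorem sigmaMap_curryComponent_sigmaEv (g : (∐ fun n => c n ⊗ d n) ⟶ t) :
    Limits.Sigma.map (fun n => curryComponent g n ▷ d n) ≫ sigmaEv d t = g := by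
  refine Sigma.hom_ext _ _ fun n => ?_
  rw [Sigma.ι_map_assoc, sigmaEv, colimit.ι_desc]
  dsimp only [Cofan.mk_ι_app]
  rw [BraidedCategory.braiding_naturality_left_assoc, ← MonoidalClosed.uncurry_eq,
    curryComponent, MonoidalClosed.uncurry_curry, SymmetricCategory.symmetry_assoc]

theorem curryComponent_sigmaEv (n : ℕ) : curryComponent (sigmaEv d t) n = 𝟙 (d n ⟹ t) := by
  rw [curryComponent, sigmaEv, colimit.ι_desc]
  dsimp only [Cofan.mk_ι_app]
  rw [SymmetricCategory.symmetry_assoc, ← MonoidalClosed.uncurry_id_eq_ev,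
    MonoidalClosed.curry_uncurry]

end CurryComponent

namespace TraversalOptic

variable {s t a b : C}

noncomputable def ofConcrete (p : s ⟶ ∐ fun n => (npow b n ⟹ t) ⊗ npow a n) :
    TraversalOptic s t a b :=
  Quot.mk _ ⟨fun n => npow b n ⟹ t, p, sigmaEv (npow b) t⟩

noncomputable def concreteForward
    (x : Σ c : ℕ → C,
      (s ⟶ ∐ fun n => c n ⊗ npow a n) × ((∐ fun n => c n ⊗ npow b n) ⟶ t)) :
    s ⟶ ∐ fun n => (npow b n ⟹ t) ⊗ npow a n :=
  x.2.1 ≫ Limits.Sigma.map fun n => curryComponent x.2.2 n ▷ npow a n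

theorem concreteForward_eq_of_rel {x y} (h : TraversalRel s t a b x y) :
    concreteForward x = concreteForward y := by
  obtain ⟨f, hforward, hbackward⟩ := h
  simp only [tensorHom_id] at hforward hbackward
  simp only [concreteForward, hforward, hbackward, Category.assoc, Sigma.map_comp_map,
    ← comp_whiskerRight, comp_curryComponent]

noncomputable def toConcrete :
    TraversalOptic s t a b → (s ⟶ ∐ fun n => (npow b n ⟹ t) ⊗ npow a n) :=
  Quot.lift concreteForward fun _ _ => concreteForward_eq_of_rel

theorem toConcrete_ofConcrete (p : s ⟶ ∐ fun n => (npow b n ⟹ t) ⊗ npow a n) :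
    toConcrete (ofConcrete p) = p := by
  simp only [toConcrete, ofConcrete, concreteForward, curryComponent_sigmaEv,
    id_whiskerRight, Sigma.map_id, Category.comp_id]

theorem ofConcrete_toConcrete (o : TraversalOptic s t a b) : ofConcrete (toConcrete o) = o := by
  induction o using Quot.ind with
  | mk x =>
    change ofConcrete (concreteForward x) = _
    refine (Quot.sound ⟨curryComponent x.2.2, ?_, ?_⟩).symm
    · simp only [concreteForward, tensorHom_id]
    · simp only [tensorHom_id, sigmaMap_curryComponent_sigmaEv]

theorem ofConcrete_bijective :
    Function.Bijective (ofConcrete : (s ⟶ _) → TraversalOptic s t a b) :=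
  Function.bijective_iff_has_inverse.mpr
    ⟨toConcrete, toConcrete_ofConcrete, ofConcrete_toConcrete⟩

end TraversalOptic

/-- Traversals are optics for power series functors: the canonical (natural) map from the
concrete form `C(s, ∐ₙ (aⁿ ⊗ (bⁿ ⟹ t)))` to the coend
`∫^{c ∈ [ℕ,C]} C(s, ∐ₙ (cₙ ⊗ aⁿ)) × C(∐ₙ (cₙ ⊗ bⁿ), t)` is a bijection. -/
theorem traversal_is_optic_for_power_series (s t a b : C) :
    Function.Bijective
      (fun h : s ⟶ ∐ fun n => npow a n ⊗ (npow b n ⟹ t) =>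
        (Quot.mk (TraversalRel s t a b)
          ⟨fun n => npow b n ⟹ t,
            h ≫ Limits.Sigma.map (fun n => (β_ (npow a n) (npow b n ⟹ t)).hom),
            Sigma.desc fun n => (β_ (npow b n ⟹ t) (npow b n)).hom ≫
              (ihom.ev (npow b n)).app t⟩ :
          TraversalOptic s t a b)) :=
  TraversalOptic.ofConcrete_bijective.comp
    (asIso (Limits.Sigma.map fun n => (β_ (npow a n) (npow b n ⟹ t)).hom)).homToEquiv.bijective
end

section
/- Grates are optics for the exponential: in a small cartesian closed category C, for all objects s, t, a, b there is an isomorphism of sets ∫^{c ∈ Cᵒᵖ} C(s, c ⟹ a) × C(c ⟹ b, t) ≅ C((s ⟹ a) ⟹ b, t), where the coend is over the opposite category Cᵒᵖ acting by exponentiation. -/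
/-!
In a symmetric monoidal closed category, swapping the arguments of a curried map identifies
`C(s, c ⟹ a)` with `C(c, s ⟹ a)`, naturally in `c`. The coend therefore becomes
`∫^c C(c, s ⟹ a) × C(c ⟹ b, t)`, which the co-Yoneda lemma collapses to `C((s ⟹ a) ⟹ b, t)`:
the class of `(c, u, v)` goes to `pre û ≫ v`, where `û : c ⟶ s ⟹ a` is the swap of `u`, and
`(c, u, v)` is related through `û` to `(s ⟹ a, η, pre û ≫ v)`, with `η : s ⟶ (s ⟹ a) ⟹ a`
the swap of the identity.
-/

open CategoryTheory CategoryTheory.Limits CategoryTheory.MonoidalCategory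
open CategoryTheory.CartesianClosed

universe u

variable {C : Type u} [SmallCategory C] [CartesianMonoidalCategory C] [MonoidalClosed C]

/-- The generating relation of the coend `∫^{c ∈ Cᵒᵖ} C(s, c ⟹ a) × C(c ⟹ b, t)`;
a morphism `c ⟶ c'` of the indexing category `Cᵒᵖ` is a morphism `f : c' ⟶ c` of `C`,
acting on exponentials by precomposition `CartesianClosed.pre`. -/
def GrateRel (s t a b : C) :
    (Σ c : C, (s ⟶ (c ⟹ a)) × ((c ⟹ b) ⟶ t)) →
      (Σ c : C, (s ⟶ (c ⟹ a)) × ((c ⟹ b) ⟶ t)) → Prop :=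
  fun x y => ∃ f : y.1 ⟶ x.1,
    y.2.1 = x.2.1 ≫ (MonoidalClosed.pre f).app a ∧
      x.2.2 = (MonoidalClosed.pre f).app b ≫ y.2.2

/-- The existential optic for the action of the exponential:
the coend `∫^{c ∈ Cᵒᵖ} C(s, c ⟹ a) × C(c ⟹ b, t)`. -/
def GrateOptic (s t a b : C) : Type u := Quot (GrateRel s t a b)

namespace CategoryTheory.MonoidalClosed

variable {V : Type*} [Category V] [MonoidalCategory V] [SymmetricCategory V] [MonoidalClosed V]

def swapArgs (s c a : V) : (s ⟶ c ⟹ a) ≃ (c ⟶ s ⟹ a) where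
  toFun u := curry ((β_ s c).hom ≫ uncurry u)
  invFun v := curry ((β_ c s).hom ≫ uncurry v)
  left_inv u := by simp [← Category.assoc]
  right_inv v := by simp [← Category.assoc]

theorem swapArgs_symm (s c a : V) : (swapArgs s c a).symm = swapArgs c s a := rfl

theorem swapArgs_comp_pre_app {s c c' a : V} (u : s ⟶ c ⟹ a) (f : c' ⟶ c) :
    swapArgs s c' a (u ≫ (pre f).app a) = f ≫ swapArgs s c a u := by
  simp only [swapArgs, Equiv.coe_fn_mk, ← curry_natural_left, uncurry_pre_app,
    BraidedCategory.braiding_naturality_right_assoc]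

end CategoryTheory.MonoidalClosed

open MonoidalClosed CartesianMonoidalCategory

-- Makes `lift (snd _ _) (fst _ _)` in the statement the braiding.
attribute [local instance] BraidedCategory.ofCartesianMonoidalCategory

theorem swapArgs_curry_braiding_ev (s a : C) :
    swapArgs s (s ⟹ a) a (curry (lift (snd _ _) (fst _ _) ≫ (ihom.ev s).app a)) = 𝟙 (s ⟹ a) := by
  rw [← Equiv.eq_symm_apply, swapArgs_symm]
  simp only [swapArgs, Equiv.coe_fn_mk, uncurry_id_eq_ev]
  rfl

namespace GrateOptic

variable {s t a b : C}

def ofHom (g : ((s ⟹ a) ⟹ b) ⟶ t) : GrateOptic s t a b :=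
  Quot.mk _ ⟨s ⟹ a, curry (lift (snd _ _) (fst _ _) ≫ (ihom.ev s).app a), g⟩

def toHom : GrateOptic s t a b → (((s ⟹ a) ⟹ b) ⟶ t) :=
  Quot.lift (fun x => (pre (swapArgs s x.1 a x.2.1)).app b ≫ x.2.2) <| by
    rintro ⟨c, u, v⟩ ⟨c', u', v'⟩ ⟨f, hu, hv⟩
    dsimp only at f hu hv ⊢
    rw [hu, hv, swapArgs_comp_pre_app, pre_map, NatTrans.comp_app, Category.assoc]

theorem toHom_ofHom (g : ((s ⟹ a) ⟹ b) ⟶ t) : toHom (ofHom g) = g := by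
  simp [toHom, ofHom, swapArgs_curry_braiding_ev]

theorem ofHom_toHom (x : GrateOptic s t a b) : ofHom (toHom x) = x := by
  induction x using Quot.ind with | mk x => ?_
  obtain ⟨c, u, v⟩ := x
  refine Quot.sound ⟨swapArgs s c a u, ?_, rfl⟩
  apply (swapArgs s c a).injective
  rw [swapArgs_comp_pre_app, swapArgs_curry_braiding_ev, Category.comp_id]

def equivHom (s t a b : C) : (((s ⟹ a) ⟹ b) ⟶ t) ≃ GrateOptic s t a b :=
  ⟨ofHom, toHom, toHom_ofHom, ofHom_toHom⟩

end GrateOptic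

/-- Grates are optics for the exponential: the canonical (natural) map from the concrete form
`C((s ⟹ a) ⟹ b, t)` to the coend `∫^{c ∈ Cᵒᵖ} C(s, c ⟹ a) × C(c ⟹ b, t)` is a bijection. -/
theorem grate_is_optic_for_exponential (s t a b : C) :
    Function.Bijective (fun g : ((s ⟹ a) ⟹ b) ⟶ t =>
      (Quot.mk (GrateRel s t a b)
        ⟨s ⟹ a,
          MonoidalClosed.curry (CartesianMonoidalCategory.lift (CartesianMonoidalCategory.snd (s ⟹ a) s)
            (CartesianMonoidalCategory.fst (s ⟹ a) s) ≫ (ihom.ev s).app a),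
          g⟩ : GrateOptic s t a b)) :=
  (GrateOptic.equivHom s t a b).bijective
end

section
/- Achromatic lenses are optics for the action c ↦ (c + 1) × (−): in a small bicartesian closed category C (finite products, finite coproducts, internal homs, so products distribute over coproducts), for all objects s, t, a, b there is an isomorphism of sets ∫^{c ∈ C} C(s, (c + 1) × a) × C((c + 1) × b, t) ≅ C(s, (b ⟹ t) + 1) × C(s, a) × C(b, t). -/
/-!
Achromatic lenses are optics for the action `c ↦ (c + 1) ⨯ (−)`: in a small bicartesian
closed category `C` (with terminal object `𝟙_ C`), for all objects `s t a b` the coend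
`∫^{c ∈ C} C(s, (c ⨿ 1) ⊗ a) × C((c ⨿ 1) ⊗ b, t)` is isomorphic to
`C(s, (b ⟹ t) ⨿ 1) × C(s, a) × C(b, t)`.  We assert that the canonical comparison map
from the concrete form is a bijection.
-/

open CategoryTheory CategoryTheory.Limits CategoryTheory.MonoidalCategory
open CategoryTheory.CartesianClosed

universe u

variable {C : Type u} [SmallCategory C] [CartesianMonoidalCategory C] [MonoidalClosed C]
  [HasFiniteCoproducts C]

attribute [local instance] BraidedCategory.ofCartesianMonoidalCategory

/-- The generating relation of the coend
`∫^{c ∈ C} C(s, (c ⨿ 1) ⊗ a) × C((c ⨿ 1) ⊗ b, t)`. -/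
def AchromaticRel (s t a b : C) :
    (Σ c : C, (s ⟶ (c ⨿ 𝟙_ C) ⊗ a) × ((c ⨿ 𝟙_ C) ⊗ b ⟶ t)) →
      (Σ c : C, (s ⟶ (c ⨿ 𝟙_ C) ⊗ a) × ((c ⨿ 𝟙_ C) ⊗ b ⟶ t)) → Prop :=
  fun x y => ∃ f : x.1 ⟶ y.1,
    y.2.1 = x.2.1 ≫ (coprod.map f (𝟙 (𝟙_ C)) ⊗ₘ 𝟙 a) ∧
      x.2.2 = (coprod.map f (𝟙 (𝟙_ C)) ⊗ₘ 𝟙 b) ≫ y.2.2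

/-- The existential optic for the action `c ↦ (c ⨿ 1) ⊗ (−)`. -/
def AchromaticOptic (s t a b : C) : Type u := Quot (AchromaticRel s t a b)

/-!
A morphism `(c ⨿ 1) ⊗ b ⟶ t` amounts, by distributivity and currying, to a pair
`c ⟶ (b ⟹ t)` and `b ⟶ t`, and the first component is natural in `c`. The coend relation along
that first component therefore moves every representative `(c, l, r)` to one with `c = b ⟹ t`
and a canonical residual determined by `b ⟶ t` alone (Yoneda reduction), and what remains of `l`
is a pair `s ⟶ (b ⟹ t) ⨿ 1`, `s ⟶ a`.
-/

open CartesianMonoidalCategory MonoidalClosed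

theorem whiskerRight_coprod_hom_ext {D : Type*} [Category D] [MonoidalCategory D]
    [HasBinaryCoproducts D] [IsMonoidalRightDistrib D] {X Y Z W : D}
    {g h : (X ⨿ Y) ⊗ Z ⟶ W} (hl : coprod.inl ▷ Z ≫ g = coprod.inl ▷ Z ≫ h)
    (hr : coprod.inr ▷ Z ≫ g = coprod.inr ▷ Z ≫ h) : g = h := by
  rw [← cancel_epi (rightDistrib Z X Y).hom]
  ext
  · simpa using hl
  · simpa using hr

section CoprodUnit

variable {D : Type*} [Category D] [MonoidalCategory D] [HasBinaryCoproducts D] {b t c c' : D}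

noncomputable def restrictInr (r : (c ⨿ 𝟙_ D) ⊗ b ⟶ t) : b ⟶ t :=
  (λ_ b).inv ≫ coprod.inr ▷ b ≫ r

theorem restrictInr_map_comp (f : c ⟶ c') (r : (c' ⨿ 𝟙_ D) ⊗ b ⟶ t) :
    restrictInr ((coprod.map f (𝟙 (𝟙_ D)) ⊗ₘ 𝟙 b) ≫ r) = restrictInr r := by
  rw [restrictInr, restrictInr, tensorHom_id, ← comp_whiskerRight_assoc, coprod.inr_map,
    comp_whiskerRight_assoc, id_whiskerRight, Category.id_comp]

variable [BraidedCategory D] [MonoidalClosed D]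

noncomputable def curryInl (r : (c ⨿ 𝟙_ D) ⊗ b ⟶ t) : c ⟶ b ⟹ t :=
  curry ((β_ b c).hom ≫ coprod.inl ▷ b ≫ r)

theorem curryInl_map_comp (f : c ⟶ c') (r : (c' ⨿ 𝟙_ D) ⊗ b ⟶ t) :
    curryInl ((coprod.map f (𝟙 (𝟙_ D)) ⊗ₘ 𝟙 b) ≫ r) = f ≫ curryInl r := by
  rw [curryInl, curryInl, tensorHom_id, ← comp_whiskerRight_assoc, coprod.inl_map,
    comp_whiskerRight_assoc, ← BraidedCategory.braiding_naturality_right_assoc,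
    curry_natural_left]

end CoprodUnit

section Residual

variable {b t : C}

noncomputable def lensResidual (u : b ⟶ t) : ((b ⟹ t) ⨿ 𝟙_ C) ⊗ b ⟶ t :=
  (coprod.desc (𝟙 (b ⟹ t)) (curry (fst b (𝟙_ C) ≫ u)) ⊗ₘ 𝟙 b) ≫
    (β_ (b ⟹ t) b).hom ≫ (ihom.ev b).app t

theorem inl_whiskerRight_lensResidual (u : b ⟶ t) :
    coprod.inl ▷ b ≫ lensResidual u = (β_ (b ⟹ t) b).hom ≫ (ihom.ev b).app t := by
  rw [lensResidual, tensorHom_id, ← comp_whiskerRight_assoc, coprod.inl_desc,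
    id_whiskerRight, Category.id_comp]

theorem inr_whiskerRight_lensResidual (u : b ⟶ t) :
    coprod.inr ▷ b ≫ lensResidual u = (λ_ b).hom ≫ u := by
  rw [lensResidual, tensorHom_id, ← comp_whiskerRight_assoc, coprod.inr_desc,
    BraidedCategory.braiding_naturality_left_assoc, ← uncurry_eq, uncurry_curry,
    ← Category.assoc, ← rightUnitor_hom, braiding_rightUnitor]

theorem curryInl_lensResidual (u : b ⟶ t) : curryInl (lensResidual u) = 𝟙 (b ⟹ t) := by
  rw [curryInl, inl_whiskerRight_lensResidual, ← Category.assoc, SymmetricCategory.symmetry,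
    Category.id_comp, ← uncurry_id_eq_ev, curry_uncurry]

theorem restrictInr_lensResidual (u : b ⟶ t) : restrictInr (lensResidual u) = u := by
  rw [restrictInr, inr_whiskerRight_lensResidual, Iso.inv_hom_id_assoc]

theorem map_curryInl_comp_lensResidual {c : C} (r : (c ⨿ 𝟙_ C) ⊗ b ⟶ t) :
    (coprod.map (curryInl r) (𝟙 (𝟙_ C)) ⊗ₘ 𝟙 b) ≫ lensResidual (restrictInr r) = r := by
  apply whiskerRight_coprod_hom_ext
  · rw [tensorHom_id, ← comp_whiskerRight_assoc, coprod.inl_map, comp_whiskerRight_assoc,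
      inl_whiskerRight_lensResidual, BraidedCategory.braiding_naturality_left_assoc,
      ← uncurry_eq, curryInl, uncurry_curry, ← Category.assoc, SymmetricCategory.symmetry,
      Category.id_comp]
  · rw [tensorHom_id, ← comp_whiskerRight_assoc, coprod.inr_map, comp_whiskerRight_assoc,
      id_whiskerRight, Category.id_comp, inr_whiskerRight_lensResidual, restrictInr,
      Iso.hom_inv_id_assoc]

end Residual

abbrev AchromaticLens (s t a b : C) : Type u := (s ⟶ (b ⟹ t) ⨿ 𝟙_ C) × (s ⟶ a) × (b ⟶ t)

namespace AchromaticOptic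

variable {s t a b : C}

noncomputable def ofLens (l : AchromaticLens s t a b) : AchromaticOptic s t a b :=
  Quot.mk _ ⟨b ⟹ t, lift l.1 l.2.1, lensResidual l.2.2⟩

noncomputable def lensOfRep (x : Σ c : C, (s ⟶ (c ⨿ 𝟙_ C) ⊗ a) × ((c ⨿ 𝟙_ C) ⊗ b ⟶ t)) :
    AchromaticLens s t a b :=
  (x.2.1 ≫ fst _ _ ≫ coprod.map (curryInl x.2.2) (𝟙 (𝟙_ C)), x.2.1 ≫ snd _ _,
    restrictInr x.2.2)

theorem lensOfRep_eq_of_rel {x y : Σ c : C, (s ⟶ (c ⨿ 𝟙_ C) ⊗ a) × ((c ⨿ 𝟙_ C) ⊗ b ⟶ t)}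
    (h : AchromaticRel s t a b x y) : lensOfRep x = lensOfRep y := by
  obtain ⟨f, hl, hr⟩ := h
  simp only [lensOfRep, hl, hr, curryInl_map_comp, restrictInr_map_comp, coprod.map_comp_id,
    Category.assoc, tensorHom_fst_assoc, tensorHom_snd, Category.comp_id]

noncomputable def toLens : AchromaticOptic s t a b → AchromaticLens s t a b :=
  Quot.lift lensOfRep fun _ _ => lensOfRep_eq_of_rel

theorem toLens_ofLens (l : AchromaticLens s t a b) : toLens (ofLens l) = l := by
  simp only [toLens, ofLens, lensOfRep, curryInl_lensResidual, restrictInr_lensResidual,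
    coprod.map_id_id, Category.comp_id, lift_fst, lift_snd]

theorem ofLens_toLens (x : AchromaticOptic s t a b) : ofLens (toLens x) = x := by
  obtain ⟨⟨c, l, r⟩⟩ := x
  refine (Quot.sound ⟨curryInl r, ?_, (map_curryInl_comp_lensResidual r).symm⟩).symm
  ext <;> simp [toLens, lensOfRep]

end AchromaticOptic

/-- Achromatic lenses are optics for the action `c ↦ (c + 1) ⨯ (−)`: the canonical
(natural) map from the concrete form `C(s, (b ⟹ t) ⨿ 1) × C(s, a) × C(b, t)` to the coend
`∫^{c ∈ C} C(s, (c ⨿ 1) ⊗ a) × C((c ⨿ 1) ⊗ b, t)` is a bijection. -/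
theorem achromatic_lens_is_optic (s t a b : C) :
    Function.Bijective
      (fun wvu : (s ⟶ (b ⟹ t) ⨿ 𝟙_ C) × (s ⟶ a) × (b ⟶ t) =>
        (Quot.mk (AchromaticRel s t a b)
          ⟨b ⟹ t,
            CartesianMonoidalCategory.lift wvu.1 wvu.2.1,
            (coprod.desc (𝟙 (b ⟹ t))
                (MonoidalClosed.curry (CartesianMonoidalCategory.fst b (𝟙_ C) ≫ wvu.2.2)) ⊗ₘ 𝟙 b) ≫
              (β_ (b ⟹ t) b).hom ≫ (ihom.ev b).app t⟩ :
          AchromaticOptic s t a b)) :=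
  Function.bijective_iff_has_inverse.mpr
    ⟨AchromaticOptic.toLens, AchromaticOptic.toLens_ofLens, AchromaticOptic.ofLens_toLens⟩
end

section
/- Kaleidoscopes are optics for applicative functors: for all sets s, t, a, b there is an isomorphism ∫^{F ∈ App} Set(s, F a) × Set(F b, t) ≅ Set(Σ_{n∈ℕ} sⁿ × (aⁿ → b), t) ≅ Π_{n∈ℕ} ((aⁿ → b) → (sⁿ → t)), where the coend ranges over the category App of applicative functors. -/
/-!
Kaleidoscopes are optics for applicative functors: for all sets `s t a b`,
`∫^{F ∈ App} Set(s, F a) × Set(F b, t) ≅ Set(Σₙ sⁿ × (aⁿ → b), t) ≅ Πₙ ((aⁿ → b) → (sⁿ → t))`,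
where the coend ranges over the category `App` of applicative functors, i.e. lax monoidal
endofunctors of `(Set, ×)` with monoidal natural transformations between them.
-/

open CategoryTheory

/-- An applicative functor: a lax monoidal endofunctor of `(Set, ×)`. -/
structure AppFunctor where
  /-- the underlying endofunctor of `Set` -/
  F : Type ⥤ Type
  /-- the unit `1 ⟶ F 1` of the lax monoidal structure -/
  unit : Unit → F.obj Unit
  /-- the multiplication (tensorator) `F X × F Y ⟶ F (X × Y)` -/
  mult : ∀ X Y : Type, F.obj X × F.obj Y → F.obj (X × Y)
  mult_natural : ∀ {X X' Y Y' : Type} (f : X → X') (g : Y → Y') (x : F.obj X) (y : F.obj Y),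
    F.map (TypeCat.ofHom (Prod.map f g)) (mult X Y (x, y)) = mult X' Y' (F.map (TypeCat.ofHom f) x, F.map (TypeCat.ofHom g) y)
  mult_assoc : ∀ (X Y Z : Type) (x : F.obj X) (y : F.obj Y) (z : F.obj Z),
    F.map (TypeCat.ofHom (fun p => (p.1.1, (p.1.2, p.2))))
        (mult (X × Y) Z (mult X Y (x, y), z)) = mult X (Y × Z) (x, mult Y Z (y, z))
  left_unit : ∀ (X : Type) (x : F.obj X),
    F.map (TypeCat.ofHom Prod.snd) (mult Unit X (unit Unit.unit, x)) = x
  right_unit : ∀ (X : Type) (x : F.obj X),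
    F.map (TypeCat.ofHom Prod.fst) (mult X Unit (x, unit Unit.unit)) = x

/-- A morphism of applicative functors: a monoidal natural transformation. -/
structure AppHom (P Q : AppFunctor) where
  /-- the underlying natural transformation -/
  η : P.F ⟶ Q.F
  unit_comm : ∀ u : Unit, η.app Unit (P.unit u) = Q.unit u
  mult_comm : ∀ (X Y : Type) (x : P.F.obj X) (y : P.F.obj Y),
    η.app (X × Y) (P.mult X Y (x, y)) = Q.mult X Y (η.app X x, η.app Y y)

/-- The generating relation of the coend `∫^{F ∈ App} Set(s, F a) × Set(F b, t)`. -/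
def KaleidoscopeRel (s t a b : Type) :
    (Σ P : AppFunctor, (s → P.F.obj a) × (P.F.obj b → t)) →
      (Σ P : AppFunctor, (s → P.F.obj a) × (P.F.obj b → t)) → Prop :=
  fun x y => ∃ φ : AppHom x.1 y.1,
    (y.2.1 = fun z => φ.η.app a (x.2.1 z)) ∧ (x.2.2 = fun z => y.2.2 (φ.η.app b z))

/-- The existential optic for the action of applicative functors:
the coend `∫^{F ∈ App} Set(s, F a) × Set(F b, t)`. -/
def KaleidoscopeOptic (s t a b : Type) : Type 1 := Quot (KaleidoscopeRel s t a b)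

/-!
The functor `G X = Σ n, sⁿ × (aⁿ → X)` is the free applicative on `X ↦ s × (a → X)`, with
generator `gen : s → G a`. Using the `n`-fold product `(F a)ⁿ → F (aⁿ)` of an applicative `F`,
every `f : s → F a` extends to a monoidal transformation `lift F f : G ⟶ F` with
`lift F f ∘ gen = f`, naturally in `F`, and `lift G gen = id`. Hence every `⟨F, f, g⟩` in the
coend is identified with `⟨G, gen, g ∘ lift F f⟩`, so the coend is `Set(G b, t)`.
The second isomorphism is currying.
-/

theorem Fin.comp_append {α β : Sort*} {n m : ℕ} (f : α → β) (u : Fin n → α)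
    (v : Fin m → α) : f ∘ Fin.append u v = Fin.append (f ∘ u) (f ∘ v) := by
  ext i
  refine Fin.addCases (fun j => ?_) (fun j => ?_) i <;> simp

namespace AppFunctor

variable (P : AppFunctor)

theorem map_map {X Y Z : Type} (f : X → Y) (g : Y → Z) (x : P.F.obj X) :
    P.F.map (TypeCat.ofHom g) (P.F.map (TypeCat.ofHom f) x) =
      P.F.map (TypeCat.ofHom (g ∘ f)) x :=
  (P.F.map_comp_apply (TypeCat.ofHom f) (TypeCat.ofHom g) x).symm

theorem map_id_apply {X : Type} (x : P.F.obj X) : P.F.map (TypeCat.ofHom id) x = x :=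
  P.F.map_id_apply X x

theorem mult_map_left {X X' Y : Type} (f : X → X') (x : P.F.obj X) (y : P.F.obj Y) :
    P.mult X' Y (P.F.map (TypeCat.ofHom f) x, y) =
      P.F.map (TypeCat.ofHom (Prod.map f id)) (P.mult X Y (x, y)) := by
  rw [P.mult_natural, map_id_apply]

theorem mult_map_right {X Y Y' : Type} (g : Y → Y') (x : P.F.obj X) (y : P.F.obj Y) :
    P.mult X Y' (x, P.F.map (TypeCat.ofHom g) y) =
      P.F.map (TypeCat.ofHom (Prod.map id g)) (P.mult X Y (x, y)) := by
  rw [P.mult_natural, map_id_apply]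

def pow {a : Type} : ∀ n : ℕ, (Fin n → P.F.obj a) → P.F.obj (Fin n → a)
  | 0, _ => P.F.map (TypeCat.ofHom fun _ => Fin.elim0) (P.unit ())
  | n + 1, x => P.F.map (TypeCat.ofHom fun q => Fin.snoc q.1 q.2)
      (P.mult _ _ (pow n (Fin.init x), x (Fin.last n)))

theorem pow_snoc {a : Type} {n : ℕ} (x : Fin n → P.F.obj a) (y : P.F.obj a) :
    P.pow (n + 1) (Fin.snoc x y) =
      P.F.map (TypeCat.ofHom fun q => Fin.snoc q.1 q.2) (P.mult _ _ (P.pow n x, y)) := by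
  simp only [pow, Fin.init_snoc, Fin.snoc_last]

theorem pow_append {a : Type} {n : ℕ} (x : Fin n → P.F.obj a) :
    ∀ {m : ℕ} (y : Fin m → P.F.obj a), P.pow (n + m) (Fin.append x y) =
      P.F.map (TypeCat.ofHom fun q => Fin.append q.1 q.2) (P.mult _ _ (P.pow n x, P.pow m y))
  | 0, y => by
    have hxy : Fin.append x y = x := funext (Fin.append_left x y)
    have happend : (fun q : (Fin n → a) × (Fin 0 → a) => Fin.append q.1 q.2) ∘
        Prod.map id (fun _ : Unit => Fin.elim0) = Prod.fst :=
      funext fun q => funext (Fin.append_left q.1 _)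
    rw [hxy, pow, mult_map_right, map_map, happend]
    exact (P.right_unit _ _).symm
  | m + 1, y => by
    rw [← Fin.snoc_init_self y, Fin.append_snoc]
    refine (P.pow_snoc (Fin.append x (Fin.init y)) _).trans ?_
    rw [pow_snoc, pow_append x (Fin.init y), mult_map_left, mult_map_right, ← P.mult_assoc]
    simp only [map_map]
    exact congrArg (fun f => P.F.map (TypeCat.ofHom f) _)
      (funext fun q => (Fin.append_snoc _ _ _).symm)

end AppFunctor

theorem AppHom.app_pow {P Q : AppFunctor} (φ : AppHom P Q) {a : Type} (n : ℕ)
    (x : Fin n → P.F.obj a) : φ.η.app _ (P.pow n x) = Q.pow n (fun i => φ.η.app a (x i)) := by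
  induction n with
  | zero =>
    rw [AppFunctor.pow, NatTrans.naturality_apply, φ.unit_comm]; rfl
  | succ n ih =>
    rw [AppFunctor.pow, NatTrans.naturality_apply, φ.mult_comm, ih]; rfl

def freeAppFunctor (s a : Type) : Type ⥤ Type where
  obj X := Σ n : ℕ, (Fin n → s) × ((Fin n → a) → X)
  map g := TypeCat.ofHom fun x => ⟨x.1, x.2.1, g ∘ x.2.2⟩

theorem freeAppFunctor.mk_eq_mk {s a X : Type} {n m : ℕ} (hnm : n = m) {xs : Fin n → s}
    {ys : Fin m → s} {h : (Fin n → a) → X} {k : (Fin m → a) → X}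
    (hs : ∀ i : Fin m, xs (Fin.cast hnm.symm i) = ys i)
    (hk : ∀ v : Fin m → a, h (fun i => v (Fin.cast hnm i)) = k v) :
    (⟨n, xs, h⟩ : (freeAppFunctor s a).obj X) = ⟨m, ys, k⟩ := by
  subst hnm
  obtain rfl : xs = ys := funext hs
  obtain rfl : h = k := funext hk
  rfl

def freeApp (s a : Type) : AppFunctor where
  F := freeAppFunctor s a
  unit _ := ⟨0, Fin.elim0, fun _ => ()⟩
  mult X Y p := ⟨p.1.1 + p.2.1, Fin.append p.1.2.1 p.2.2.1,
    fun v => (p.1.2.2 fun i => v (Fin.castAdd _ i), p.2.2.2 fun j => v (Fin.natAdd _ j))⟩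
  mult_natural _ _ _ _ := rfl
  mult_assoc := by
    rintro X Y Z ⟨n, xs, h⟩ ⟨m, ys, k⟩ ⟨p, zs, l⟩
    refine freeAppFunctor.mk_eq_mk (Nat.add_assoc n m p) (fun i => ?_) (fun v => ?_)
    · rw [Fin.append_assoc]; rfl
    · refine congrArg₂ Prod.mk (congrArg h ?_)
        (congrArg₂ Prod.mk (congrArg k ?_) (congrArg l ?_)) <;>
        · funext i; exact congrArg v (Fin.ext (by simp [Nat.add_assoc]))
  left_unit := by
    rintro X ⟨n, xs, h⟩
    refine freeAppFunctor.mk_eq_mk (Nat.zero_add n) (fun i => ?_) (fun v => ?_)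
    · rw [Fin.elim0_append]; rfl
    · exact congrArg h (funext fun i => congrArg v (Fin.ext (by simp)))
  right_unit := by
    rintro X ⟨n, xs, h⟩
    refine freeAppFunctor.mk_eq_mk (Nat.add_zero n) (fun i => ?_) (fun v => ?_)
    · rw [Fin.append_elim0]; rfl
    · exact congrArg h (funext fun i => congrArg v (Fin.ext (by simp)))

namespace freeApp

variable {s a : Type}

def gen (z : s) : (freeApp s a).F.obj a := ⟨1, fun _ => z, fun v => v 0⟩

theorem pow_gen (n : ℕ) (xs : Fin n → s) :
    (freeApp s a).pow n (gen ∘ xs) = ⟨n, xs, id⟩ := by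
  induction n with
  | zero => exact freeAppFunctor.mk_eq_mk rfl (fun i => i.elim0) (fun v => funext (·.elim0))
  | succ n ih =>
    simp only [AppFunctor.pow]
    rw [← Fin.comp_init, ih]
    refine freeAppFunctor.mk_eq_mk rfl (fun i => ?_) (fun v => ?_)
    · exact congrFun ((Fin.append_right_eq_snoc _ _).trans (Fin.snoc_init_self xs)) i
    · exact Fin.snoc_init_self v

variable (P : AppFunctor) (f : s → P.F.obj a)

def lift : AppHom (freeApp s a) P where
  η :=
    { app X := TypeCat.ofHom fun k => P.F.map (TypeCat.ofHom k.2.2) (P.pow k.1 (f ∘ k.2.1))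
      naturality X Y g := by
        ext k
        exact (P.map_map k.2.2 g _).symm }
  unit_comm := by
    rintro ⟨⟩
    change P.F.map (TypeCat.ofHom fun _ => ()) (P.F.map (TypeCat.ofHom fun _ => Fin.elim0)
      (P.unit ())) = P.unit ()
    rw [P.map_map]
    exact P.map_id_apply _
  mult_comm := by
    rintro X Y ⟨n, xs, h⟩ ⟨m, ys, k⟩
    change P.F.map (TypeCat.ofHom fun v => (h fun i => v (Fin.castAdd m i),
        k fun j => v (Fin.natAdd n j))) (P.pow (n + m) (f ∘ Fin.append xs ys)) =
      P.mult X Y (P.F.map (TypeCat.ofHom h) (P.pow n (f ∘ xs)),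
        P.F.map (TypeCat.ofHom k) (P.pow m (f ∘ ys)))
    rw [Fin.comp_append, P.pow_append, ← P.mult_natural, P.map_map]
    refine congrArg (fun g => P.F.map (TypeCat.ofHom g) _) (funext fun q => ?_)
    simp only [Function.comp_apply, Fin.append_left, Fin.append_right]
    rfl

theorem lift_app_mk {X : Type} (n : ℕ) (xs : Fin n → s) (h : (Fin n → a) → X) :
    (lift P f).η.app X ⟨n, xs, h⟩ = P.F.map (TypeCat.ofHom h) (P.pow n (f ∘ xs)) :=
  rfl

theorem lift_gen (z : s) : (lift P f).η.app a (gen z) = f z := by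
  have hproj : ((fun v : Fin 1 → a => v 0) ∘ fun q => Fin.snoc q.1 q.2) ∘
      Prod.map (fun _ : Unit => (Fin.elim0 : Fin 0 → a)) id = Prod.snd :=
    funext fun q => Fin.snoc_last (α := fun _ => a) (p := Fin.elim0) q.2
  rw [gen, lift_app_mk]
  change P.F.map _ (P.F.map _ (P.mult _ _ (P.F.map _ (P.unit ()), f z))) = f z
  rw [P.mult_map_left, P.map_map, P.map_map, hproj, P.left_unit]

theorem lift_gen_self {X : Type} (k : (freeApp s a).F.obj X) :
    (lift (freeApp s a) gen).η.app X k = k := by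
  obtain ⟨n, xs, h⟩ := k
  rw [lift_app_mk, pow_gen]
  rfl

theorem app_lift {Q : AppFunctor} (φ : AppHom P Q) {X : Type} (k : (freeApp s a).F.obj X) :
    φ.η.app X ((lift P f).η.app X k) = (lift Q (φ.η.app a ∘ f)).η.app X k := by
  obtain ⟨n, xs, h⟩ := k
  rw [lift_app_mk, lift_app_mk, NatTrans.naturality_apply, φ.app_pow]
  rfl

end freeApp

namespace KaleidoscopeOptic

variable {s t a b : Type}

def toConcrete :
    KaleidoscopeOptic s t a b → (Σ n : ℕ, (Fin n → s) × ((Fin n → a) → b)) → t :=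
  Quot.lift (fun x (k : (freeApp s a).F.obj b) => x.2.2 ((freeApp.lift x.1 x.2.1).η.app b k)) <| by
    rintro x y ⟨φ, hf, hg⟩
    funext k
    rw [hg]
    dsimp only
    rw [freeApp.app_lift, hf]
    rfl

def ofConcrete (q : (Σ n : ℕ, (Fin n → s) × ((Fin n → a) → b)) → t) :
    KaleidoscopeOptic s t a b :=
  Quot.mk _ ⟨freeApp s a, freeApp.gen, q⟩

def equivConcrete (s t a b : Type) :
    KaleidoscopeOptic s t a b ≃ ((Σ n : ℕ, (Fin n → s) × ((Fin n → a) → b)) → t) where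
  toFun := toConcrete
  invFun := ofConcrete
  left_inv := by
    rintro ⟨P, f, g⟩
    exact Quot.sound ⟨freeApp.lift P f, funext fun z => (freeApp.lift_gen P f z).symm, rfl⟩
  right_inv q := funext fun k => congrArg q (freeApp.lift_gen_self k)

end KaleidoscopeOptic

/-- Kaleidoscopes are optics for applicative functors:
`∫^{F ∈ App} Set(s, F a) × Set(F b, t) ≅ Set(Σₙ sⁿ × (aⁿ → b), t)
  ≅ Πₙ ((aⁿ → b) → (sⁿ → t))`. -/
theorem kaleidoscope_is_optic_for_applicatives (s t a b : Type) :
    Nonempty (KaleidoscopeOptic s t a b ≃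
        ((Σ n : ℕ, (Fin n → s) × ((Fin n → a) → b)) → t)) ∧
    Nonempty (((Σ n : ℕ, (Fin n → s) × ((Fin n → a) → b)) → t) ≃
        (∀ n : ℕ, ((Fin n → a) → b) → (Fin n → s) → t)) :=
  ⟨⟨KaleidoscopeOptic.equivConcrete s t a b⟩,
    ⟨{ toFun := fun q n h xs => q ⟨n, xs, h⟩
       invFun := fun p k => p k.1 k.2.2 k.2.1
       left_inv := fun _ => rfl
       right_inv := fun _ => rfl }⟩⟩
end

section
/- Algebraic lenses: let ψ be a monad on a small category C with finite products, and let ψ-Alg be its Eilenberg–Moore category with forgetful functor U : ψ-Alg ⥤ C. For all objects s, t, a, b of C there is an isomorphism of sets ∫^{c ∈ ψ-Alg} C(s, U c × a) × C(U c × b, t) ≅ C(s, a) × C(ψ s × b, t). -/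
/-!
A representative `(c, f, g)` of the coend factors through the free algebra: the transpose
`ψ s ⟶ c` of `f ≫ fst : s ⟶ U c` under the free–forgetful adjunction is an algebra morphism
relating `(c, f, g)` to a representative at `ψ s` whose first component is `⟨η, f ≫ snd⟩`.
Reading off `(f ≫ snd, (transpose × 𝟙) ≫ g)` is invariant under the relation by naturality
of the transpose, and inverts the comparison map because the transpose of `η` is the identity.
-/

open CategoryTheory CategoryTheory.Limits

universe u

variable {C : Type u} [SmallCategory C] [HasFiniteProducts C] (ψ : Monad C)

/-- The generating relation of the coend `∫^{c ∈ ψ-Alg} C(s, U c ⨯ a) × C(U c ⨯ b, t)`,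
where `U = (Monad.forget ψ)` is the forgetful functor from the Eilenberg–Moore category. -/
def AlgLensRel (s t a b : C) :
    (Σ c : ψ.Algebra, (s ⟶ (Monad.forget ψ).obj c ⨯ a) × ((Monad.forget ψ).obj c ⨯ b ⟶ t)) →
      (Σ c : ψ.Algebra, (s ⟶ (Monad.forget ψ).obj c ⨯ a) × ((Monad.forget ψ).obj c ⨯ b ⟶ t)) →
        Prop :=
  fun x y => ∃ f : x.1 ⟶ y.1,
    y.2.1 = x.2.1 ≫ prod.map ((Monad.forget ψ).map f) (𝟙 a) ∧
      x.2.2 = prod.map ((Monad.forget ψ).map f) (𝟙 b) ≫ y.2.2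

/-- The existential optic for the action of `ψ`-algebras by `c ↦ U c ⨯ (−)`. -/
def AlgLensOptic (s t a b : C) : Type u := Quot (AlgLensRel ψ s t a b)

theorem CategoryTheory.Limits.prod.lift_comp_map_id {D : Type*} [Category D] {W X Y A : D}
    [HasBinaryProduct X A] [HasBinaryProduct Y A] (p : W ⟶ Y ⨯ A) (f : W ⟶ X) (h : X ⟶ Y)
    (hf : f ≫ h = p ≫ prod.fst) : prod.lift f (p ≫ prod.snd) ≫ prod.map h (𝟙 A) = p := by
  rw [prod.lift_map, Category.comp_id, hf, ← prod.comp_lift, prod.lift_fst_snd, Category.comp_id]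

theorem CategoryTheory.Monad.η_comp_adj_homEquiv_symm_f {D : Type*} [Category D] (T : Monad D)
    {X : D} {c : T.Algebra} (h : X ⟶ T.forget.obj c) :
    T.η.app X ≫ ((T.adj.homEquiv X c).symm h).f = h := by
  have h' := T.adj.homEquiv_unit X c ((T.adj.homEquiv X c).symm h)
  rw [Equiv.apply_symm_apply, Monad.adj_unit] at h'
  exact h'.symm

namespace AlgLensOptic

abbrev Rep (s t a b : C) : Type u :=
  Σ c : ψ.Algebra, (s ⟶ (Monad.forget ψ).obj c ⨯ a) × ((Monad.forget ψ).obj c ⨯ b ⟶ t)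

/-- The concrete form `C(s, a) × C(ψ s ⨯ b, t)`, with `ψ s` written as `U (free s)` so that the
product lemmas apply to it syntactically. -/
abbrev Concrete (s t a b : C) : Type u :=
  (s ⟶ a) × ((Monad.forget ψ).obj ((Monad.free ψ).obj s) ⨯ b ⟶ t)

variable {s t a b : C}

noncomputable def freeRep (vu : Concrete ψ s t a b) : Rep ψ s t a b :=
  ⟨(Monad.free ψ).obj s, prod.lift (ψ.η.app s) vu.1, vu.2⟩

noncomputable def concreteOfRep (x : Rep ψ s t a b) : Concrete ψ s t a b :=
  let transpose : (Monad.free ψ).obj s ⟶ x.1 := (ψ.adj.homEquiv s x.1).symm (x.2.1 ≫ prod.fst)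
  (x.2.1 ≫ prod.snd, prod.map ((Monad.forget ψ).map transpose) (𝟙 b) ≫ x.2.2)

theorem concreteOfRep_eq_of_rel {x y : Rep ψ s t a b} (h : AlgLensRel ψ s t a b x y) :
    concreteOfRep ψ x = concreteOfRep ψ y := by
  obtain ⟨f, hfst, hsnd⟩ := h
  have htranspose : (ψ.adj.homEquiv s y.1).symm (y.2.1 ≫ prod.fst) =
      (ψ.adj.homEquiv s x.1).symm (x.2.1 ≫ prod.fst) ≫ f := by
    rw [← Adjunction.homEquiv_naturality_right_symm, hfst]
    simp only [Category.assoc, prod.map_fst]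
  refine Prod.ext ?_ ?_
  · simp only [concreteOfRep, hfst, Category.assoc, prod.map_snd, Category.comp_id]
  · simp only [concreteOfRep, htranspose, hsnd, Functor.map_comp]
    exact (prod.map_comp_id_assoc _ _ _).symm

theorem concreteOfRep_mk_lift (c : ψ.Algebra) (e : s ⟶ (Monad.forget ψ).obj c) (v : s ⟶ a)
    (u : (Monad.forget ψ).obj c ⨯ b ⟶ t) :
    concreteOfRep ψ ⟨c, prod.lift e v, u⟩ =
      (v, prod.map ((Monad.forget ψ).map ((ψ.adj.homEquiv s c).symm e)) (𝟙 b) ≫ u) := by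
  simp only [concreteOfRep, prod.lift_fst, prod.lift_snd]

theorem concreteOfRep_freeRep (vu : Concrete ψ s t a b) :
    concreteOfRep ψ (freeRep ψ vu) = vu := by
  have hunit : (ψ.adj.homEquiv s ((Monad.free ψ).obj s)).symm (ψ.η.app s) = 𝟙 _ := by
    simpa using ψ.adj.homEquiv_symm_unit s
  refine (concreteOfRep_mk_lift ψ _ (ψ.η.app s) vu.1 vu.2).trans ?_
  rw [hunit, CategoryTheory.Functor.map_id, prod.map_id_id, Category.id_comp]

theorem algLensRel_freeRep_concreteOfRep (x : Rep ψ s t a b) :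
    AlgLensRel ψ s t a b (freeRep ψ (concreteOfRep ψ x)) x := by
  refine ⟨(ψ.adj.homEquiv s x.1).symm (x.2.1 ≫ prod.fst), ?_, rfl⟩
  exact (prod.lift_comp_map_id _ _ _ (ψ.η_comp_adj_homEquiv_symm_f _)).symm

noncomputable def equivConcrete : AlgLensOptic ψ s t a b ≃ Concrete ψ s t a b where
  toFun := Quot.lift (concreteOfRep ψ) fun _ _ => concreteOfRep_eq_of_rel ψ
  invFun vu := Quot.mk _ (freeRep ψ vu)
  left_inv := Quot.ind fun x => Quot.sound (algLensRel_freeRep_concreteOfRep ψ x)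
  right_inv := concreteOfRep_freeRep ψ

end AlgLensOptic

/-- Algebraic lenses: the canonical (natural) map from the concrete form
`C(s, a) × C(ψ s ⨯ b, t)` to the coend `∫^{c ∈ ψ-Alg} C(s, U c ⨯ a) × C(U c ⨯ b, t)`
(using the free algebra on `s`) is a bijection. -/
theorem algebraic_lens_is_optic (s t a b : C) :
    Function.Bijective
      (fun vu : (s ⟶ a) × ((ψ : C ⥤ C).obj s ⨯ b ⟶ t) =>
        (Quot.mk (AlgLensRel ψ s t a b)
          ⟨(Monad.free ψ).obj s, prod.lift (ψ.η.app s) vu.1, vu.2⟩ :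
          AlgLensOptic ψ s t a b)) :=
  (AlgLensOptic.equivConcrete ψ).symm.bijective
end

section
/- Setters are optics for the action of arbitrary endofunctors: for all sets s, t, a, b there is an isomorphism ∫^{F ∈ [Set, Set]} Set(s, F a) × Set(F b, t) ≅ Set(s × (a → b), t), where the coend ranges over the category of all endofunctors of Set. -/
/-!
Setters are optics for the action of arbitrary endofunctors of `Set`: for all sets
`s t a b` the coend `∫^{F ∈ [Set, Set]} Set(s, F a) × Set(F b, t)` is isomorphic to
`Set(s × (a → b), t)`.  We assert that the canonical comparison map from the concrete
form (using the endofunctor `c ↦ s × (a → c)`) is a bijection.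
-/

open CategoryTheory

universe u

/-- The tabulation endofunctor `c ↦ s × (a → c)` of `Set`. -/
def tabulateFunctor (s a : Type u) : Type u ⥤ Type u where
  obj c := s × (a → c)
  map f := TypeCat.ofHom (fun x : s × (a → _) => (x.1, f ∘ x.2))

/-- The generating relation of the coend
`∫^{F ∈ [Set,Set]} Set(s, F a) × Set(F b, t)` over the category of all endofunctors
of `Set` with natural transformations between them. -/
def SetterRel (s t a b : Type u) :
    (Σ F : Type u ⥤ Type u, (s → F.obj a) × (F.obj b → t)) →
      (Σ F : Type u ⥤ Type u, (s → F.obj a) × (F.obj b → t)) → Prop :=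
  fun x y => ∃ η : x.1 ⟶ y.1,
    (y.2.1 = fun z => η.app a (x.2.1 z)) ∧ (x.2.2 = fun z => y.2.2 (η.app b z))

/-- The existential optic for the action of arbitrary endofunctors of `Set`. -/
def SetterOptic (s t a b : Type u) : Type (u + 1) := Quot (SetterRel s t a b)

/-!
The endofunctor `s × (a → -)` is free on a map `s → F a`: any `l : s → F.obj a` extends
to the natural transformation `(z, f) ↦ F.map f (l z)`. Pushing along it connects every
representative `(F, l, r)` of the coend to the tabulated one with concrete setter
`(z, f) ↦ r (F.map f (l z))`, and this setter is invariant under the coend relation by naturality,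
so it inverts the comparison map.
-/

namespace SetterOptic

variable {s t a b : Type u}

def toSetter : SetterOptic s t a b → (s × (a → b) → t) :=
  Quot.lift (fun x zf => x.2.2 (x.1.map (TypeCat.ofHom zf.2) (x.2.1 zf.1))) <| by
    rintro ⟨F, l, r⟩ ⟨G, l', r'⟩ ⟨η, hl, hr⟩
    funext zf
    dsimp only at hl hr ⊢
    rw [hr, hl]
    exact congrArg r' (NatTrans.naturality_apply η (TypeCat.ofHom zf.2) (l zf.1))

variable (s t a b) in
def ofSetter (g : s × (a → b) → t) : SetterOptic s t a b :=
  Quot.mk _ ⟨tabulateFunctor s a, fun z => (z, id), g⟩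

theorem toSetter_ofSetter (g : s × (a → b) → t) : toSetter (ofSetter s t a b g) = g :=
  rfl

def tabulateLift {F : Type u ⥤ Type u} (l : s → F.obj a) : tabulateFunctor s a ⟶ F where
  app c := TypeCat.ofHom fun x : s × (a → c) => F.map (TypeCat.ofHom x.2) (l x.1)
  naturality c d f := by
    ext x
    change F.map (TypeCat.ofHom x.2 ≫ f) (l x.1) = F.map f (F.map (TypeCat.ofHom x.2) (l x.1))
    rw [F.map_comp]
    rfl

theorem tabulateLift_app_id {F : Type u ⥤ Type u} (l : s → F.obj a) (z : s) :
    (tabulateLift l).app a (z, id) = l z :=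
  F.map_id_apply a (l z)

theorem ofSetter_toSetter (q : SetterOptic s t a b) : ofSetter s t a b (toSetter q) = q := by
  induction q using Quot.ind with
  | mk x =>
    obtain ⟨F, l, r⟩ := x
    exact Quot.sound ⟨tabulateLift l, funext fun z => (tabulateLift_app_id l z).symm, rfl⟩

end SetterOptic

open SetterOptic in
/-- Setters are optics for the action of arbitrary endofunctors: the canonical (natural)
map from the concrete form `Set(s × (a → b), t)` to the coend
`∫^{F ∈ [Set,Set]} Set(s, F a) × Set(F b, t)` is a bijection. -/
theorem setter_is_optic (s t a b : Type u) :
    Function.Bijective (fun g : s × (a → b) → t =>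
      (Quot.mk (SetterRel s t a b)
        ⟨tabulateFunctor s a, fun z => (z, id), g⟩ : SetterOptic s t a b)) :=
  Function.bijective_iff_has_inverse.mpr ⟨toSetter, toSetter_ofSetter, ofSetter_toSetter⟩
end

section
/- Affine traversals are optics for the action (c,d) ↦ c + d × (−): in a small bicartesian closed category C, for all objects s, t, a, b there is an isomorphism of sets ∫^{(c,d) ∈ C × C} C(s, c + d × a) × C(c + d × b, t) ≅ C(s, t + a × (b ⟹ t)). -/
/-!
Every `v : c ⨿ (d ⊗ b) ⟶ t` factors as `coprod.map f (g ⊗ₘ 𝟙 b) ≫ update b t`, with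
`f = coprod.inl ≫ v` and `g : d ⟶ b ⟹ t` the curried restriction of `v` to the right summand,
and these residual maps are natural in `(c, d)`. So `(t, b ⟹ t)` is a terminal residual: every
representative of the coend is related to one with residuals `(t, b ⟹ t)`, and pushing its
first component along the residual maps is an inverse to the comparison map, well defined on
the quotient.
-/

open CategoryTheory CategoryTheory.Limits CategoryTheory.MonoidalCategory
open CategoryTheory.CartesianClosed

universe u

variable {C : Type u} [SmallCategory C] [CartesianMonoidalCategory C] [MonoidalClosed C]
  [HasFiniteCoproducts C]

attribute [local instance] BraidedCategory.ofCartesianMonoidalCategory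

/-- The generating relation of the coend
`∫^{(c,d) ∈ C × C} C(s, c ⨿ (d ⊗ a)) × C(c ⨿ (d ⊗ b), t)`. -/
def AffineRel (s t a b : C) :
    (Σ cd : C × C, (s ⟶ cd.1 ⨿ (cd.2 ⊗ a)) × (cd.1 ⨿ (cd.2 ⊗ b) ⟶ t)) →
      (Σ cd : C × C, (s ⟶ cd.1 ⨿ (cd.2 ⊗ a)) × (cd.1 ⨿ (cd.2 ⊗ b) ⟶ t)) → Prop :=
  fun x y => ∃ (f : x.1.1 ⟶ y.1.1) (g : x.1.2 ⟶ y.1.2),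
    y.2.1 = x.2.1 ≫ coprod.map f (g ⊗ₘ 𝟙 a) ∧
      x.2.2 = coprod.map f (g ⊗ₘ 𝟙 b) ≫ y.2.2

/-- The existential optic for the action `(c,d) ↦ c ⨿ (d ⊗ −)`. -/
def AffineOptic (s t a b : C) : Type u := Quot (AffineRel s t a b)

namespace AffineTraversal

variable {D : Type*} [Category D] [MonoidalCategory D] [HasBinaryCoproducts D]
  {b c d c' d' t : D}

noncomputable def residualFst (v : c ⨿ (d ⊗ b) ⟶ t) : c ⟶ t :=
  coprod.inl ≫ v

lemma residualFst_map_comp (f : c ⟶ c') (g : d ⟶ d') (v : c' ⨿ (d' ⊗ b) ⟶ t) :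
    residualFst (coprod.map f (g ⊗ₘ 𝟙 b) ≫ v) = f ≫ residualFst v :=
  coprod.inl_map_assoc _ _ _

variable [BraidedCategory D] [MonoidalClosed D]

noncomputable def update (b t : D) : t ⨿ ((b ⟹ t) ⊗ b) ⟶ t :=
  coprod.desc (𝟙 t) ((β_ (b ⟹ t) b).hom ≫ (ihom.ev b).app t)

noncomputable def residualSnd (v : c ⨿ (d ⊗ b) ⟶ t) : d ⟶ b ⟹ t :=
  MonoidalClosed.curry ((β_ d b).inv ≫ coprod.inr ≫ v)

lemma residualSnd_map_comp (f : c ⟶ c') (g : d ⟶ d') (v : c' ⨿ (d' ⊗ b) ⟶ t) :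
    residualSnd (coprod.map f (g ⊗ₘ 𝟙 b) ≫ v) = g ≫ residualSnd v := by
  rw [residualSnd, residualSnd, ← MonoidalClosed.curry_natural_left, coprod.inr_map_assoc,
    tensorHom_id, BraidedCategory.braiding_inv_naturality_right_assoc]

@[simp]
lemma residualFst_update : residualFst (update b t) = 𝟙 t :=
  coprod.inl_desc _ _

@[simp]
lemma residualSnd_update : residualSnd (update b t) = 𝟙 (b ⟹ t) := by
  rw [residualSnd, update, coprod.inr_desc, Iso.inv_hom_id_assoc,
    ← MonoidalClosed.uncurry_id_eq_ev, MonoidalClosed.curry_uncurry]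

lemma map_residual_comp_update (v : c ⨿ (d ⊗ b) ⟶ t) :
    coprod.map (residualFst v) (residualSnd v ⊗ₘ 𝟙 b) ≫ update b t = v := by
  ext
  · rw [coprod.inl_map_assoc, update, coprod.inl_desc, Category.comp_id, residualFst]
  · rw [coprod.inr_map_assoc, update, coprod.inr_desc, tensorHom_id,
      BraidedCategory.braiding_naturality_left_assoc, ← MonoidalClosed.uncurry_eq, residualSnd,
      MonoidalClosed.uncurry_curry, Iso.hom_inv_id_assoc]

end AffineTraversal

namespace AffineOptic

open AffineTraversal

variable {s t a b : C}

noncomputable def encode (h : s ⟶ t ⨿ (a ⊗ (b ⟹ t))) : AffineOptic s t a b :=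
  Quot.mk _ ⟨(t, b ⟹ t), h ≫ coprod.map (𝟙 t) (β_ a (b ⟹ t)).hom, update b t⟩

noncomputable def decodeRep
    (x : Σ cd : C × C, (s ⟶ cd.1 ⨿ (cd.2 ⊗ a)) × (cd.1 ⨿ (cd.2 ⊗ b) ⟶ t)) :
    s ⟶ t ⨿ (a ⊗ (b ⟹ t)) :=
  x.2.1 ≫ coprod.map (residualFst x.2.2) (residualSnd x.2.2 ⊗ₘ 𝟙 a) ≫
    coprod.map (𝟙 t) (β_ a (b ⟹ t)).inv

lemma decodeRep_eq_of_rel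
    {x y : Σ cd : C × C, (s ⟶ cd.1 ⨿ (cd.2 ⊗ a)) × (cd.1 ⨿ (cd.2 ⊗ b) ⟶ t)}
    (h : AffineRel s t a b x y) : decodeRep x = decodeRep y := by
  obtain ⟨f, g, hu, hv⟩ := h
  rw [decodeRep, decodeRep, hu, hv, residualFst_map_comp, residualSnd_map_comp]
  simp only [Category.assoc, coprod.map_map_assoc, tensorHom_id, comp_whiskerRight]

noncomputable def decode : AffineOptic s t a b → (s ⟶ t ⨿ (a ⊗ (b ⟹ t))) :=
  Quot.lift decodeRep fun _ _ => decodeRep_eq_of_rel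

lemma decode_encode (h : s ⟶ t ⨿ (a ⊗ (b ⟹ t))) : decode (encode h) = h := by
  simp [decode, encode, decodeRep, coprod.map_map]

lemma encode_decode (x : AffineOptic s t a b) : encode (decode x) = x := by
  obtain ⟨⟨c, d⟩, u, v⟩ := x
  refine (Quot.sound ⟨residualFst v, residualSnd v, ?_, (map_residual_comp_update v).symm⟩).symm
  simp [decode, decodeRep, coprod.map_map]

end AffineOptic

/-- Affine traversals are optics for the action `(c,d) ↦ c + d ⨯ (−)`: the canonical
(natural) map from the concrete form `C(s, t ⨿ (a ⊗ (b ⟹ t)))` to the coend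
`∫^{(c,d) ∈ C × C} C(s, c ⨿ (d ⊗ a)) × C(c ⨿ (d ⊗ b), t)` is a bijection. -/
theorem affine_traversal_is_optic (s t a b : C) :
    Function.Bijective (fun h : s ⟶ t ⨿ (a ⊗ (b ⟹ t)) =>
      (Quot.mk (AffineRel s t a b)
        ⟨(t, b ⟹ t),
          h ≫ coprod.map (𝟙 t) (β_ a (b ⟹ t)).hom,
          coprod.desc (𝟙 t) ((β_ (b ⟹ t) b).hom ≫ (ihom.ev b).app t)⟩ :
        AffineOptic s t a b)) :=
  ⟨Function.LeftInverse.injective AffineOptic.decode_encode,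
    Function.RightInverse.surjective AffineOptic.encode_decode⟩
end

section
/- Glasses are optics for the action (c,d) ↦ c × (d ⟹ (−)): in a small cartesian closed category C, for all objects s, t, a, b there is an isomorphism of sets ∫^{(c,d) ∈ C × C} C(s, c × (d ⟹ a)) × C((d ⟹ b) × c, t) ≅ C(((s ⟹ a) ⟹ b) × s, t). -/
/-!
In a symmetric monoidal closed category a map `s ⟶ d ⟹ a` has a transpose `d ⟶ s ⟹ a`, natural
in `d`. Through `f ≫ fst : s ⟶ c` and the transpose `d ⟶ s ⟹ a` of `f ≫ snd`, a glass `⟨f, g⟩`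
at index `(c, d)` is identified in the coend with a glass at index `(s, s ⟹ a)` whose first
component is the canonical `⟨𝟙, transpose of 𝟙⟩ : s ⟶ s ⊗ ((s ⟹ a) ⟹ a)`; its second component
is then a concrete glass. Naturality of the transpose makes this well defined on the coend, and
its involutivity makes it inverse to the canonical map.
-/

open CategoryTheory CategoryTheory.Limits CategoryTheory.MonoidalCategory
open CategoryTheory.MonoidalClosed CategoryTheory.CartesianClosed

universe u

variable {C : Type u} [SmallCategory C] [CartesianMonoidalCategory C] [MonoidalClosed C]

attribute [local instance] BraidedCategory.ofCartesianMonoidalCategory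

/-- The generating relation of the coend
`∫^{(c,d)} C(s, c ⊗ (d ⟹ a)) × C((d ⟹ b) ⊗ c, t)`. -/
def GlassRel (s t a b : C) :
    (Σ cd : C × C, (s ⟶ cd.1 ⊗ (cd.2 ⟹ a)) × ((cd.2 ⟹ b) ⊗ cd.1 ⟶ t)) →
      (Σ cd : C × C, (s ⟶ cd.1 ⊗ (cd.2 ⟹ a)) × ((cd.2 ⟹ b) ⊗ cd.1 ⟶ t)) → Prop :=
  fun x y => ∃ (f : x.1.1 ⟶ y.1.1) (g : y.1.2 ⟶ x.1.2),
    y.2.1 = x.2.1 ≫ (f ⊗ₘ (pre g).app a) ∧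
      x.2.2 = ((pre g).app b ⊗ₘ f) ≫ y.2.2

/-- The existential optic for the action `(c,d) ↦ c ⊗ (d ⟹ (−))`. -/
def GlassOptic (s t a b : C) : Type u := Quot (GlassRel s t a b)

namespace CategoryTheory.MonoidalClosed

section Braided

variable {D : Type*} [Category D] [MonoidalCategory D] [BraidedCategory D] [MonoidalClosed D]

def curryFlip {s d a : D} (f : s ⟶ d ⟹ a) : d ⟶ s ⟹ a :=
  curry ((β_ s d).hom ≫ uncurry f)

lemma curryFlip_comp_pre_app {s d d' a : D} (f : s ⟶ d ⟹ a) (ψ : d' ⟶ d) :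
    curryFlip (f ≫ (pre ψ).app a) = ψ ≫ curryFlip f := by
  rw [curryFlip, curryFlip, uncurry_pre_app, ← curry_natural_left,
    BraidedCategory.braiding_naturality_right_assoc]

end Braided

section Symmetric

variable {D : Type*} [Category D] [MonoidalCategory D] [SymmetricCategory D] [MonoidalClosed D]

@[simp]
lemma curryFlip_curryFlip {s d a : D} (f : s ⟶ d ⟹ a) : curryFlip (curryFlip f) = f := by
  rw [curryFlip, curryFlip, uncurry_curry, SymmetricCategory.symmetry_assoc, curry_uncurry]

lemma curryFlip_injective {s d a : D} :
    Function.Injective (curryFlip : (s ⟶ d ⟹ a) → (d ⟶ s ⟹ a)) :=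
  Function.LeftInverse.injective curryFlip_curryFlip

lemma curryFlip_id (s a : D) :
    curryFlip (𝟙 (s ⟹ a)) = curry ((β_ (s ⟹ a) s).hom ≫ (ihom.ev s).app a) := by
  rw [curryFlip, uncurry_id_eq_ev]

lemma curryFlip_id_comp_pre_app_curryFlip {s d a : D} (f : s ⟶ d ⟹ a) :
    curryFlip (𝟙 (s ⟹ a)) ≫ (pre (curryFlip f)).app a = f :=
  curryFlip_injective <| by
    rw [curryFlip_comp_pre_app, curryFlip_curryFlip, Category.comp_id]

end Symmetric

end CategoryTheory.MonoidalClosed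

open CartesianMonoidalCategory

def glassToConcrete {s t a b : C}
    (x : Σ cd : C × C, (s ⟶ cd.1 ⊗ (cd.2 ⟹ a)) × ((cd.2 ⟹ b) ⊗ cd.1 ⟶ t)) :
    ((s ⟹ a) ⟹ b) ⊗ s ⟶ t :=
  ((pre (curryFlip (x.2.1 ≫ snd _ _))).app b ⊗ₘ (x.2.1 ≫ fst _ _)) ≫ x.2.2

lemma glassToConcrete_eq_of_glassRel {s t a b : C} {x y} (h : GlassRel s t a b x y) :
    glassToConcrete x = glassToConcrete y := by
  obtain ⟨⟨c, d⟩, f, g⟩ := x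
  obtain ⟨⟨c', d'⟩, f', g'⟩ := y
  obtain ⟨φ, ψ, hf, hg⟩ := h
  dsimp only at φ ψ hf hg
  have hfst : (f ≫ (φ ⊗ₘ (pre ψ).app a)) ≫ fst _ _ = (f ≫ fst _ _) ≫ φ := by simp
  have hsnd : (f ≫ (φ ⊗ₘ (pre ψ).app a)) ≫ snd _ _ = (f ≫ snd _ _) ≫ (pre ψ).app a := by simp
  simp only [glassToConcrete, hf, hg, hfst, hsnd, curryFlip_comp_pre_app, pre_map,
    NatTrans.comp_app, ← tensorHom_comp_tensorHom_assoc]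

namespace GlassOptic

def toConcrete {s t a b : C} : GlassOptic s t a b → (((s ⟹ a) ⟹ b) ⊗ s ⟶ t) :=
  Quot.lift glassToConcrete fun _ _ => glassToConcrete_eq_of_glassRel

def ofConcrete {s t a b : C} (g : ((s ⟹ a) ⟹ b) ⊗ s ⟶ t) : GlassOptic s t a b :=
  Quot.mk _ ⟨(s, s ⟹ a), lift (𝟙 s) (curryFlip (𝟙 (s ⟹ a))), g⟩

lemma toConcrete_ofConcrete {s t a b : C} (g : ((s ⟹ a) ⟹ b) ⊗ s ⟶ t) :
    toConcrete (ofConcrete g) = g := by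
  simp [toConcrete, ofConcrete, glassToConcrete]

lemma ofConcrete_toConcrete {s t a b : C} (o : GlassOptic s t a b) :
    ofConcrete (toConcrete o) = o := by
  rcases o with ⟨⟨⟨c, d⟩, f, g⟩⟩
  refine Quot.sound ⟨f ≫ fst _ _, curryFlip (f ≫ snd _ _), ?_, rfl⟩
  dsimp only
  rw [lift_map, Category.id_comp, curryFlip_id_comp_pre_app_curryFlip, lift_comp_fst_snd]

end GlassOptic

/-- Glasses are optics for the action `(c,d) ↦ c ⊗ (d ⟹ (−))`: the canonical (natural) map
from the concrete form `C(((s ⟹ a) ⟹ b) ⊗ s, t)` to the coend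
`∫^{(c,d)} C(s, c ⊗ (d ⟹ a)) × C((d ⟹ b) ⊗ c, t)` is a bijection. -/
theorem glass_is_optic (s t a b : C) :
    Function.Bijective (fun g : ((s ⟹ a) ⟹ b) ⊗ s ⟶ t =>
      (Quot.mk (GlassRel s t a b)
        ⟨(s, s ⟹ a),
          CartesianMonoidalCategory.lift (𝟙 s)
            (MonoidalClosed.curry ((β_ (s ⟹ a) s).hom ≫ (ihom.ev s).app a)),
          g⟩ : GlassOptic s t a b)) := by
  rw [← curryFlip_id]
  exact ⟨Function.LeftInverse.injective GlassOptic.toConcrete_ofConcrete,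
    Function.RightInverse.surjective GlassOptic.ofConcrete_toConcrete⟩
end

section
/- The shape–contents endofunctor K of [Set, Set], defined on objects by (K T)(a) = Σ_{n∈ℕ} T(Fin n) × (Fin n → a) and on natural transformations h : T ⟶ R by (K h)(n; s, c) = (n; h(s), c), carries a comonad structure with counit ε(n; s, c) = T(c)(s) (evaluating T on the contents function and applying to the shape) and comultiplication δ(n; s, c) = (n; (n; s, id), c). -/
/-!
All the comonad laws except two hold definitionally, the contents being carried along
unchanged. The right counit law reduces to `T(id) = id`, and naturality of the counit in `T`
to naturality of `h : T ⟶ R` at the contents map `c : Fin n → a`.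
-/

open CategoryTheory

@[simps]
def KObj (T : Type ⥤ Type) : Type ⥤ Type where
  obj a := Σ n : ℕ, T.obj (Fin n) × (Fin n → a)
  map f := TypeCat.ofHom fun x => ⟨x.1, x.2.1, f ∘ x.2.2⟩

@[simps]
def K : (Type ⥤ Type) ⥤ (Type ⥤ Type) where
  obj := KObj
  map h :=
    { app := fun a => TypeCat.ofHom fun x => ⟨x.1, h.app (Fin x.1) x.2.1, x.2.2⟩
      naturality := fun _ _ _ => rfl }
  map_id := by intros; rfl
  map_comp := by intros; rfl

def Keps (T : Type ⥤ Type) : K.obj T ⟶ T where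
  app a := TypeCat.ofHom fun x => T.map (TypeCat.ofHom x.2.2) x.2.1
  naturality := by
    intro a b f
    ext x
    exact FunctorToTypes.map_comp_apply T (TypeCat.ofHom x.2.2) f x.2.1

def Kdelta (T : Type ⥤ Type) : K.obj T ⟶ K.obj (K.obj T) where
  app a := TypeCat.ofHom fun x => ⟨x.1, ⟨x.1, x.2.1, id⟩, x.2.2⟩
  naturality := fun _ _ _ => rfl

namespace K

variable (T : Type ⥤ Type)

theorem Kdelta_comp_Keps_obj : Kdelta T ≫ Keps (K.obj T) = 𝟙 (K.obj T) := rfl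

theorem Kdelta_comp_map_Keps : Kdelta T ≫ K.map (Keps T) = 𝟙 (K.obj T) := by
  ext a ⟨n, s, c⟩
  show (⟨n, T.map (𝟙 (Fin n)) s, c⟩ : (K.obj T).obj a) = ⟨n, s, c⟩
  rw [Functor.map_id_apply]

theorem Kdelta_comp_Kdelta_obj : Kdelta T ≫ Kdelta (K.obj T) = Kdelta T ≫ K.map (Kdelta T) :=
  rfl

variable {T} {R : Type ⥤ Type} (h : T ⟶ R)

theorem map_comp_Keps : K.map h ≫ Keps R = Keps T ≫ h := by
  ext a ⟨n, s, c⟩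
  exact (NatTrans.naturality_apply h (TypeCat.ofHom c) s).symm

theorem map_comp_Kdelta : K.map h ≫ Kdelta R = Kdelta T ≫ K.map (K.map h) := rfl

end K

def K.comonad : Comonad (Type ⥤ Type) where
  toFunctor := K
  ε := { app := Keps, naturality := fun _ _ => K.map_comp_Keps }
  δ := { app := Kdelta, naturality := fun _ _ => K.map_comp_Kdelta }
  coassoc T := (K.Kdelta_comp_Kdelta_obj T).symm
  left_counit := K.Kdelta_comp_Keps_obj
  right_counit := K.Kdelta_comp_map_Keps

/-- The shape–contents endofunctor `K` together with the counit `ε (n; s, c) = T(c)(s)` and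
the comultiplication `δ (n; s, c) = (n; (n; s, id), c)` is a comonad: counitality on both
sides and coassociativity hold. -/
theorem K_is_comonad :
    (∀ T : Type ⥤ Type, Kdelta T ≫ Keps (K.obj T) = 𝟙 (K.obj T)) ∧
    (∀ T : Type ⥤ Type, Kdelta T ≫ K.map (Keps T) = 𝟙 (K.obj T)) ∧
    (∀ T : Type ⥤ Type,
      Kdelta T ≫ Kdelta (K.obj T) = Kdelta T ≫ K.map (Kdelta T)) ∧
    (∀ (T R : Type ⥤ Type) (h : T ⟶ R), K.map h ≫ Keps R = Keps T ≫ h) ∧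
    (∀ (T R : Type ⥤ Type) (h : T ⟶ R),
      K.map h ≫ Kdelta R = Kdelta T ≫ K.map (K.map h)) :=
  ⟨K.comonad.left_counit, K.comonad.right_counit, fun T => (K.comonad.coassoc T).symm,
    fun _ _ h => K.comonad.ε.naturality h, fun _ _ h => K.comonad.δ.naturality h⟩
end

section
/- Every functor between Eilenberg–Moore categories commuting with the forgetful functors is induced by a monad morphism: let (S, μ, η) and (T, μ', η') be monads on the same category C and let A : T-Alg ⥤ S-Alg be a functor with U_S ∘ A = U_T, where U_S and U_T are the forgetful functors to C. Then there exists a monad morphism α : S ⟶ T (a natural transformation preserving units and multiplications, i.e. α ∘ η = η' and α ∘ μ = μ' ∘ (α ∗ α)) such that A is the functor induced by α, sending a T-algebra (x, ρ : T x → x) to the S-algebra (x, ρ ∘ α_x) and acting as the identity on underlying morphisms. -/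
/-!
Transporting the `S`-algebra structure of `A X` along `U_S (A X) = U_T X` equips every
`T`-algebra `X` with an `S`-action `β_X : S X ⟶ X`, natural in morphisms of `T`-algebras.
Evaluating on free algebras gives `α_x := β_{T x} ∘ S η'_x : S x ⟶ T x`. Naturality of `β` along
the structure map `ρ : (T x, μ'_x) ⟶ (x, ρ)` of an algebra, together with `ρ ∘ η'_x = 𝟙`,
forces `β_X = ρ ∘ α_x`; so `A` is induced by `α`, and the unit and associativity laws of the
actions `β` on free algebras make `α` a monad morphism.
-/

open CategoryTheory

universe v u

namespace CategoryTheory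

variable {C : Type u} [Category.{v} C]

lemma Functor.ext_of_comp_faithful {D E : Type*} [Category D] [Category E] {F G : C ⥤ D}
    (H : D ⥤ E) [H.Faithful] (hobj : ∀ X, F.obj X = G.obj X) (h : F ⋙ H = G ⋙ H) : F = G :=
  Functor.ext hobj fun _ _ f => H.map_injective <| by
    simpa [eqToHom_map] using Functor.congr_hom h f

namespace Monad

variable {S T : Monad C}

def Algebra.transport (P : S.Algebra) {x : C} (h : P.A = x) : S.Algebra where
  A := x
  a := S.map (eqToHom h.symm) ≫ P.a ≫ eqToHom h
  unit := by subst h; simp [P.unit]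
  assoc := by subst h; simp [P.assoc]

lemma Algebra.ext_of_transport {P Q : S.Algebra} (h : P.A = Q.A)
    (ha : (P.transport h).a = Q.a) : P = Q := by
  obtain ⟨P, p, _, _⟩ := P
  obtain ⟨Q, q, _, _⟩ := Q
  dsimp at h
  subst h
  simp only [transport, eqToHom_refl, Functor.map_id, Category.id_comp, Category.comp_id] at ha
  subst ha
  rfl

variable (S) in
@[simps]
def algebraStructure : forget S ⋙ (S : C ⥤ C) ⟶ forget S where
  app P := P.a
  naturality _ _ f := f.h

section Action

variable (β : forget T ⋙ (S : C ⥤ C) ⟶ forget T)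

/- `(T.free.obj x).A` is `T.obj x` only after unfolding `free`, which is why the rewrites
involving `β.app (T.free.obj x)` below need `erw`. -/
@[simps]
def natTransOfAction : (S : C ⥤ C) ⟶ T where
  app x := S.map (T.η.app x) ≫ β.app (T.free.obj x)
  naturality x y f := by
    have hβ : S.map (T.map f) ≫ β.app (T.free.obj y) = β.app (T.free.obj x) ≫ T.map f :=
      β.naturality (T.free.map f)
    erw [Category.assoc, ← hβ, ← Functor.map_comp_assoc, ← Functor.map_comp_assoc,
      ← T.η.naturality]
    rfl

lemma action_eq_natTransOfAction_comp (X : T.Algebra) :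
    β.app X = (natTransOfAction β).app X.A ≫ X.a := by
  have hβ : S.map X.a ≫ β.app X = β.app (T.free.obj X.A) ≫ X.a :=
    β.naturality (⟨X.a, X.assoc.symm⟩ : T.free.obj X.A ⟶ X)
  erw [natTransOfAction_app, Category.assoc, ← hβ, ← Functor.map_comp_assoc, X.unit,
    Functor.map_id, Category.id_comp]

def monadHomOfAction (hunit : ∀ X : T.Algebra, S.η.app X.A ≫ β.app X = 𝟙 X.A)
    (hassoc : ∀ X : T.Algebra, S.μ.app X.A ≫ β.app X = S.map (β.app X) ≫ β.app X) :
    S ⟶ T where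
  toNatTrans := natTransOfAction β
  app_η x := by
    erw [natTransOfAction_app, ← S.η.naturality_assoc, hunit (T.free.obj x)]
    exact Category.comp_id _
  app_μ x := by
    erw [Category.assoc, ← action_eq_natTransOfAction_comp β (T.free.obj x), natTransOfAction_app,
      ← S.μ.naturality_assoc, hassoc (T.free.obj x)]
    exact (S.toFunctor.map_comp_assoc _ _ _).symm

end Action

section Lift

variable (A : T.Algebra ⥤ S.Algebra) (hA : A ⋙ forget S = forget T)

def actionOfCompForgetEq : forget T ⋙ (S : C ⥤ C) ⟶ forget T :=
  eqToHom (by rw [← hA]; rfl) ≫ Functor.whiskerLeft A (algebraStructure S) ≫ eqToHom hA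

lemma actionOfCompForgetEq_app (X : T.Algebra) :
    (actionOfCompForgetEq A hA).app X = ((A.obj X).transport (Functor.congr_obj hA X)).a := by
  simp only [actionOfCompForgetEq, NatTrans.comp_app, eqToHom_app, Functor.whiskerLeft_app,
    algebraStructure_app, Algebra.transport, eqToHom_map]
  rfl

def monadHomOfCompForgetEq : S ⟶ T :=
  monadHomOfAction (actionOfCompForgetEq A hA)
    (fun X => by rw [actionOfCompForgetEq_app]; exact ((A.obj X).transport _).unit)
    (fun X => by rw [actionOfCompForgetEq_app]; exact ((A.obj X).transport _).assoc)

theorem eq_algebraFunctorOfMonadHom_of_comp_forget_eq :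
    A = algebraFunctorOfMonadHom (monadHomOfCompForgetEq A hA) := by
  refine Functor.ext_of_comp_faithful (forget S) (fun X => ?_)
    (hA.trans (algebra_equiv_of_iso_monads_comp_forget _).symm)
  refine Algebra.ext_of_transport (Functor.congr_obj hA X) ?_
  exact (actionOfCompForgetEq_app A hA X).symm.trans (action_eq_natTransOfAction_comp _ X)

end Lift

end Monad

end CategoryTheory

theorem em_functor_is_induced_by_monad_hom {C : Type u} [Category.{v} C]
    (S T : Monad C) (A : T.Algebra ⥤ S.Algebra)
    (hA : A ⋙ Monad.forget S = Monad.forget T) :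
    ∃ α : S ⟶ T, A = Monad.algebraFunctorOfMonadHom α :=
  ⟨Monad.monadHomOfCompForgetEq A hA, Monad.eq_algebraFunctorOfMonadHom_of_comp_forget_eq A hA⟩
end
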